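/- arXiv:1704.06170 — 11 statements merged into one kernel-verified Lean document; each statement's English description precedes it below -/
import Mathlib

section
/- For every n ∈ ℕ, the map β sending y ∈ F to the vector x = (x_{ij}) ∈ ℝ^{n(n+1)/2} defined by x_{ii} = y_{2i-1,2i} for i ∈ {1,…,n} and x_{ij} = y_{2j-1,2j} − y_{2i,2j} for 1 ≤ i < j ≤ n is a bijection from F onto BQP(n). -/
/-- `y ∈ LOP m`: `y` is the characteristic vector of a linear order (permutation `π`)
on `{1, …, m}`, with coordinates `y i j` for `1 ≤ i < j ≤ m` equal to `1` iff `π i < π j`;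
coordinates outside the index range are normalized to `0`. -/
def LOP (m : ℕ) : Set (ℕ → ℕ → ℝ) :=
  {y | (∀ i j, ¬(1 ≤ i ∧ i < j ∧ j ≤ m) → y i j = 0) ∧
    ∃ π : ℕ → ℕ, Set.BijOn π (Set.Icc 1 m) (Set.Icc 1 m) ∧
      ∀ i j, 1 ≤ i → i < j → j ≤ m → y i j = if π i < π j then (1 : ℝ) else 0}

/-- The face `F ⊆ LOP (2n)` cut out by the supporting hyperplanes
`y_{2i,2j-1} = 0`, `y_{2i-1,2i} + y_{2i,2j} - y_{2i-1,2j} = 0` and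
`y_{2i-1,2j-1} + y_{2j-1,2j} - y_{2i-1,2j} = 0` for all `1 ≤ i < j ≤ n`. -/
def FaceF (n : ℕ) : Set (ℕ → ℕ → ℝ) :=
  {y | y ∈ LOP (2 * n) ∧ ∀ i j, 1 ≤ i → i < j → j ≤ n →
    y (2 * i) (2 * j - 1) = 0 ∧
    y (2 * i - 1) (2 * i) + y (2 * i) (2 * j) - y (2 * i - 1) (2 * j) = 0 ∧
    y (2 * i - 1) (2 * j - 1) + y (2 * j - 1) (2 * j) - y (2 * i - 1) (2 * j) = 0}

/-- `x ∈ BQP n`: the vertex set of the boolean quadric polytope: 0/1 vectors with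
coordinates `x i j` for `1 ≤ i ≤ j ≤ n` satisfying `x i j = x i i * x j j` for `i < j`;
coordinates outside the index range are normalized to `0`. -/
def BQP (n : ℕ) : Set (ℕ → ℕ → ℝ) :=
  {x | (∀ i j, ¬(1 ≤ i ∧ i ≤ j ∧ j ≤ n) → x i j = 0) ∧
    (∀ i j, 1 ≤ i → i ≤ j → j ≤ n → x i j = 0 ∨ x i j = 1) ∧
    (∀ i j, 1 ≤ i → i < j → j ≤ n → x i j = x i i * x j j)}


/-- The map `β` sending `y ∈ F` to `x = β y` with `x i i = y (2i-1) (2i)` and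
`x i j = y (2j-1) (2j) - y (2i) (2j)` for `1 ≤ i < j ≤ n`
(coordinates outside the index range are `0`). -/
def beta (n : ℕ) (y : ℕ → ℕ → ℝ) : ℕ → ℕ → ℝ := fun i j =>
  if 1 ≤ i ∧ i = j ∧ j ≤ n then y (2 * i - 1) (2 * i)
  else if 1 ≤ i ∧ i < j ∧ j ≤ n then y (2 * j - 1) (2 * j) - y (2 * i) (2 * j)
  else 0

/-!
Write `b i = y (2i-1) (2i)`. On the face `F` the entry `y (2i) (2j-1)` vanishes and the two other
face equations give `y (2i-1) (2j)` and `y (2i-1) (2j-1)` from `b` and `y (2i) (2j)`; since `b` and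
`y (2i) (2j)` can be read off `β y`, the map `β` is injective. Transitivity of the order forces
`y (2i) (2j) = (1 - b i) b j`, so `β y` is the 0/1 vector with `x i j = b i b j`. Conversely every
0/1 vector `b` is realised by an explicit linear order (`faceKey`).
-/

open Finset

section keyRank

variable {ι α : Type*} [LinearOrder α]

def keyRank (s : Finset ι) (key : ι → α) (p : ι) : ℕ := #{q ∈ s | key q ≤ key p}

variable {s : Finset ι} {key : ι → α}

lemma keyRank_mono {p q : ι} (h : key p ≤ key q) : keyRank s key p ≤ keyRank s key q :=
  card_le_card <| monotone_filter_right s fun _ _ hr => hr.trans h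

lemma keyRank_lt_keyRank_iff {p q : ι} (hq : q ∈ s) :
    keyRank s key p < keyRank s key q ↔ key p < key q := by
  refine ⟨fun h => lt_of_not_ge fun hqp => h.not_ge (keyRank_mono hqp), fun h => card_lt_card ?_⟩
  refine (ssubset_iff_of_subset (monotone_filter_right s fun _ _ hr => hr.trans h.le)).2
    ⟨q, mem_filter.2 ⟨hq, le_rfl⟩, fun hmem => h.not_ge (mem_filter.1 hmem).2⟩

lemma bijOn_keyRank (hkey : Set.InjOn key s) :
    Set.BijOn (keyRank s key) s (Set.Icc 1 #s) := by
  have hmaps : Set.MapsTo (keyRank s key) s (Finset.Icc 1 #s) := fun p hp => by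
    simp only [coe_Icc, Set.mem_Icc]
    exact ⟨card_pos.mpr ⟨p, mem_filter.mpr ⟨hp, le_rfl⟩⟩, card_le_card (filter_subset _ _)⟩
  have hinj : Set.InjOn (keyRank s key) s := fun p hp q hq h =>
    hkey hp hq <| le_antisymm
      (not_lt.mp fun hlt => h.not_gt ((keyRank_lt_keyRank_iff hp).mpr hlt))
      (not_lt.mp fun hlt => h.not_lt ((keyRank_lt_keyRank_iff hq).mpr hlt))
  rw [← coe_Icc]
  exact ⟨hmaps, hinj, surjOn_of_injOn_of_card_le _ hmaps hinj (by simp)⟩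

end keyRank

section orderVector

variable {α : Type*} [LinearOrder α]

def orderVector (m : ℕ) (key : ℕ → α) : ℕ → ℕ → ℝ := fun p q =>
  if 1 ≤ p ∧ p < q ∧ q ≤ m then if key p < key q then 1 else 0 else 0

variable {m : ℕ} {key : ℕ → α}

lemma orderVector_apply {p q : ℕ} (hp : 1 ≤ p) (hpq : p < q) (hq : q ≤ m) :
    orderVector m key p q = if key p < key q then 1 else 0 :=
  if_pos ⟨hp, hpq, hq⟩

lemma orderVector_mem_LOP (hkey : Set.InjOn key (Set.Icc 1 m)) : orderVector m key ∈ LOP m := by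
  refine ⟨fun p q h => if_neg h, keyRank (Finset.Icc 1 m) key, ?_, fun p q hp hpq hq => ?_⟩
  · simpa using bijOn_keyRank (s := Finset.Icc 1 m) (by simpa using hkey)
  · rw [orderVector_apply hp hpq hq]
    exact if_congr (keyRank_lt_keyRank_iff (by simp; omega)).symm rfl rfl

end orderVector

namespace LOP

variable {m : ℕ} {y : ℕ → ℕ → ℝ}

lemma apply_eq_zero_or_one (hy : y ∈ LOP m) (p q : ℕ) : y p q = 0 ∨ y p q = 1 := by
  obtain ⟨hout, π, -, hπ⟩ := hy
  by_cases h : 1 ≤ p ∧ p < q ∧ q ≤ m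
  · rw [hπ p q h.1 h.2.1 h.2.2]
    split_ifs <;> simp
  · exact Or.inl (hout p q h)

lemma apply_eq_zero_trans (hy : y ∈ LOP m) {p q r : ℕ} (hp : 1 ≤ p) (hpq : p < q) (hqr : q < r)
    (hr : r ≤ m) (hpq₀ : y p q = 0) (hqr₀ : y q r = 0) : y p r = 0 := by
  obtain ⟨-, π, -, hπ⟩ := hy
  rw [hπ p q hp hpq (by omega)] at hpq₀
  rw [hπ q r (by omega) hqr hr] at hqr₀
  rw [hπ p r hp (hpq.trans hqr) hr]
  simp only [ite_eq_right_iff, one_ne_zero, imp_false, not_lt] at hpq₀ hqr₀ ⊢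
  exact hqr₀.trans hpq₀

end LOP

lemma FaceF.apply_even_even {n : ℕ} {y : ℕ → ℕ → ℝ} (hy : y ∈ FaceF n) {i j : ℕ}
    (hi : 1 ≤ i) (hij : i < j) (hj : j ≤ n) :
    y (2 * i) (2 * j) = (1 - y (2 * i - 1) (2 * i)) * y (2 * j - 1) (2 * j) := by
  obtain ⟨h₀, h₁, h₂⟩ := hy.2 i j hi hij hj
  have hbounds : ∀ p q, 0 ≤ y p q ∧ y p q ≤ 1 := fun p q => by
    rcases LOP.apply_eq_zero_or_one hy.1 p q with h | h <;> simp [h]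
  have htrans : y (2 * i - 1) (2 * i) = 0 → y (2 * i - 1) (2 * j - 1) = 0 := fun h =>
    LOP.apply_eq_zero_trans hy.1 (by omega) (by omega) (by omega) (by omega) h h₀
  obtain ⟨hu₀, hu₁⟩ := hbounds (2 * i) (2 * j)
  obtain ⟨hv₀, hv₁⟩ := hbounds (2 * i - 1) (2 * j)
  obtain ⟨hw₀, hw₁⟩ := hbounds (2 * i - 1) (2 * j - 1)
  rcases LOP.apply_eq_zero_or_one hy.1 (2 * i - 1) (2 * i) with ha | ha
  · have hw := htrans ha
    rcases LOP.apply_eq_zero_or_one hy.1 (2 * j - 1) (2 * j) with hc | hc <;>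
      rw [ha, hc] <;> linarith
  · rw [ha]
    linarith

section beta

variable {n : ℕ} {y : ℕ → ℕ → ℝ} {i j : ℕ}

lemma beta_self (hi : 1 ≤ i) (hin : i ≤ n) : beta n y i i = y (2 * i - 1) (2 * i) :=
  if_pos ⟨hi, rfl, hin⟩

lemma beta_of_lt (hi : 1 ≤ i) (hij : i < j) (hj : j ≤ n) :
    beta n y i j = y (2 * j - 1) (2 * j) - y (2 * i) (2 * j) := by
  rw [beta, if_neg (by omega), if_pos ⟨hi, hij, hj⟩]

lemma beta_of_not_le (h : ¬(1 ≤ i ∧ i ≤ j ∧ j ≤ n)) : beta n y i j = 0 := by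
  rw [beta, if_neg (by omega), if_neg (by omega)]

end beta

lemma forall_of_pair_blocks {n : ℕ} {P : ℕ → ℕ → Prop}
    (hdiag : ∀ i, 1 ≤ i → i ≤ n → P (2 * i - 1) (2 * i))
    (hblock : ∀ i j, 1 ≤ i → i < j → j ≤ n →
      P (2 * i - 1) (2 * j - 1) ∧ P (2 * i - 1) (2 * j) ∧ P (2 * i) (2 * j - 1) ∧ P (2 * i) (2 * j))
    {p q : ℕ} (hp : 1 ≤ p) (hpq : p < q) (hq : q ≤ 2 * n) : P p q := by
  obtain ⟨i, rfl | rfl⟩ : ∃ i, p = 2 * i - 1 ∨ p = 2 * i := ⟨(p + 1) / 2, by omega⟩ <;>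
    obtain ⟨j, rfl | rfl⟩ : ∃ j, q = 2 * j - 1 ∨ q = 2 * j := ⟨(q + 1) / 2, by omega⟩
  · exact (hblock i j (by omega) (by omega) (by omega)).1
  · obtain rfl | hij : i = j ∨ i < j := by omega
    · exact hdiag i (by omega) (by omega)
    · exact (hblock i j (by omega) hij (by omega)).2.1
  · exact (hblock i j (by omega) (by omega) (by omega)).2.2.1
  · exact (hblock i j (by omega) (by omega) (by omega)).2.2.2

lemma beta_mapsTo (n : ℕ) : Set.MapsTo (beta n) (FaceF n) (BQP n) := by
  intro y hy
  have hmul : ∀ i j, 1 ≤ i → i < j → j ≤ n → beta n y i j = beta n y i i * beta n y j j := by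
    intro i j hi hij hj
    rw [beta_of_lt hi hij hj, beta_self hi (by omega), beta_self (by omega) hj,
      FaceF.apply_even_even hy hi hij hj]
    ring
  have hdiag : ∀ i, 1 ≤ i → i ≤ n → beta n y i i = 0 ∨ beta n y i i = 1 := fun i hi hin => by
    rw [beta_self hi hin]
    exact LOP.apply_eq_zero_or_one hy.1 _ _
  refine ⟨fun i j h => beta_of_not_le h, fun i j hi hij hj => ?_, hmul⟩
  obtain rfl | hlt := hij.eq_or_lt
  · exact hdiag i hi hj
  · rw [hmul i j hi hlt hj]
    rcases hdiag i hi (by omega) with h | h <;> rcases hdiag j (by omega) hj with h' | h' <;>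
      simp [h, h']

lemma beta_injOn (n : ℕ) : Set.InjOn (beta n) (FaceF n) := by
  intro y hy y' hy' h
  have hdiag : ∀ i, 1 ≤ i → i ≤ n → y (2 * i - 1) (2 * i) = y' (2 * i - 1) (2 * i) :=
    fun i hi hin => by simpa only [beta_self hi hin] using congrFun (congrFun h i) i
  have heven : ∀ i j, 1 ≤ i → i < j → j ≤ n → y (2 * i) (2 * j) = y' (2 * i) (2 * j) := by
    intro i j hi hij hj
    have := congrFun (congrFun h i) j
    rw [beta_of_lt hi hij hj, beta_of_lt hi hij hj, hdiag j (by omega) hj] at this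
    linarith
  funext p q
  by_cases hpq : 1 ≤ p ∧ p < q ∧ q ≤ 2 * n
  · refine forall_of_pair_blocks (P := fun p q => y p q = y' p q) hdiag
      (fun i j hi hij hj => ?_) hpq.1 hpq.2.1 hpq.2.2
    obtain ⟨h₀, h₁, h₂⟩ := hy.2 i j hi hij hj
    obtain ⟨h₀', h₁', h₂'⟩ := hy'.2 i j hi hij hj
    have hbi := hdiag i hi (by omega)
    have hbj := hdiag j (by omega) hj
    have hu := heven i j hi hij hj
    exact ⟨by linarith, by linarith, h₀.trans h₀'.symm, hu⟩
  · rw [hy.1.1 p q hpq, hy'.1.1 p q hpq]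

/-- The order behind the preimage of a 0/1 vector `b`: first the elements `2i - 1` with
`b i = 1`, then both elements of each pair with `b i = 0`, then the elements `2i` with `b i = 1`;
each of the three blocks in decreasing order. -/
noncomputable def faceKey (n : ℕ) (b : ℕ → ℝ) (p : ℕ) : ℤ :=
  2 * n * (if b ((p + 1) / 2) = 1 then if p % 2 = 1 then 0 else 2 else 1) - p

section faceKey

variable {n : ℕ} {b : ℕ → ℝ}

lemma faceKey_injOn : Set.InjOn (faceKey n b) (Set.Icc 1 (2 * n)) := by
  intro p hp q hq h
  simp only [Set.mem_Icc] at hp hq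
  simp only [faceKey] at h
  split_ifs at h <;> omega

lemma faceKey_odd {i : ℕ} (hi : 1 ≤ i) :
    faceKey n b (2 * i - 1) = 2 * n * (if b i = 1 then 0 else 1) - (2 * i - 1) := by
  rw [faceKey, show (2 * i - 1 + 1) / 2 = i by omega]
  split_ifs <;> omega

lemma faceKey_even {i : ℕ} :
    faceKey n b (2 * i) = 2 * n * (if b i = 1 then 2 else 1) - 2 * i := by
  rw [faceKey, show (2 * i + 1) / 2 = i by omega]
  split_ifs <;> omega

lemma orderVector_faceKey_diag (hb : ∀ i, 1 ≤ i → i ≤ n → b i = 0 ∨ b i = 1) {i : ℕ}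
    (hi : 1 ≤ i) (hin : i ≤ n) : orderVector (2 * n) (faceKey n b) (2 * i - 1) (2 * i) = b i := by
  simp only [orderVector, faceKey_odd hi, faceKey_even]
  rcases hb i hi hin with h | h <;> simp only [h, zero_ne_one, if_true, if_false] <;>
    split_ifs <;> first | omega | norm_num

lemma orderVector_faceKey_mem_FaceF (hb : ∀ i, 1 ≤ i → i ≤ n → b i = 0 ∨ b i = 1) :
    orderVector (2 * n) (faceKey n b) ∈ FaceF n := by
  refine ⟨orderVector_mem_LOP faceKey_injOn, fun i j hi hij hj => ?_⟩
  simp only [orderVector, faceKey_odd hi, faceKey_odd (by omega : 1 ≤ j), faceKey_even]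
  rcases hb i hi (by omega) with h | h <;> rcases hb j (by omega) hj with h' | h' <;>
    simp only [h, h', zero_ne_one, if_true, if_false] <;>
    refine ⟨?_, ?_, ?_⟩ <;> split_ifs <;> first | omega | norm_num

end faceKey

lemma beta_surjOn (n : ℕ) : Set.SurjOn (beta n) (FaceF n) (BQP n) := by
  rintro x ⟨hout, h01, hmul⟩
  have hb : ∀ i, 1 ≤ i → i ≤ n → x i i = 0 ∨ x i i = 1 := fun i hi hin => h01 i i hi le_rfl hin
  set y := orderVector (2 * n) (faceKey n fun i => x i i)
  have hy : y ∈ FaceF n := orderVector_faceKey_mem_FaceF hb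
  have hdiag : ∀ i, 1 ≤ i → i ≤ n → y (2 * i - 1) (2 * i) = x i i :=
    fun i => orderVector_faceKey_diag hb
  refine ⟨y, hy, funext₂ fun i j => ?_⟩
  by_cases hij : 1 ≤ i ∧ i ≤ j ∧ j ≤ n
  · obtain ⟨hi, hij, hj⟩ := hij
    obtain rfl | hlt := hij.eq_or_lt
    · rw [beta_self hi hj, hdiag i hi hj]
    · rw [beta_of_lt hi hlt hj, FaceF.apply_even_even hy hi hlt hj,
        hdiag i hi (by omega), hdiag j (by omega) hj, hmul i j hi hlt hj]
      ring
  · rw [beta_of_not_le hij, hout i j hij]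

/-- for every `n`, the map `β` is a bijection from the face `F`
onto `BQP n`. -/
theorem beta_bijOn (n : ℕ) : Set.BijOn (beta n) (FaceF n) (BQP n) :=
  ⟨beta_mapsTo n, beta_injOn n, beta_surjOn n⟩
end

section
/- For every n ∈ ℕ, there exists an injective affine map A : ℝ^{n(n+1)/2} → ℝ^{2n(2n−1)/2} such that the image A(conv(BQP(n))) of the boolean quadric polytope is an exposed face of the convex hull of LOP(2n); in other words, BQP(n) is affinely equivalent to a face of the linear ordering polytope on 2n elements. -/
namespace BQPLOP


/-- number of selected indices in `[1,k]` -/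
def cnt (σ : ℕ → Bool) (k : ℕ) : ℕ := ((Finset.Icc 1 k).filter (fun m => σ m)).card

lemma cnt_zero (σ : ℕ → Bool) : cnt σ 0 = 0 := by simp [cnt]

lemma cnt_succ (σ : ℕ → Bool) (k : ℕ) :
    cnt σ (k+1) = cnt σ k + (if σ (k+1) then 1 else 0) := by
  unfold cnt
  rw [← Finset.insert_Icc_right_eq_Icc_add_one (by omega), Finset.filter_insert]
  split_ifs with h
  · rw [Finset.card_insert_of_notMem (by simp)]
  · simp

lemma c_mono (σ : ℕ → Bool) {i j : ℕ} (h : i ≤ j) : cnt σ i ≤ cnt σ j := by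
  induction j with
  | zero => have : i = 0 := by omega
            subst this; exact le_refl _
  | succ k ih =>
    rcases Nat.lt_or_ge i (k+1) with h'|h'
    · have := ih (by omega); rw [cnt_succ]; split_ifs <;> omega
    · have h'' : i = k + 1 := by omega
      subst h''; exact le_refl _

lemma c_sub (σ : ℕ → Bool) {i j : ℕ} (h : i ≤ j) : cnt σ j + i ≤ cnt σ i + j := by
  induction j with
  | zero => have : i = 0 := by omega
            subst this; exact le_refl _
  | succ k ih =>
    rcases Nat.lt_or_ge i (k+1) with h'|h'
    · have := ih (by omega); rw [cnt_succ]; split_ifs <;> omega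
    · have h'' : i = k + 1 := by omega
      subst h''; exact le_refl _

lemma c_le (σ : ℕ → Bool) (k : ℕ) : cnt σ k ≤ k := by
  have h0 := cnt_zero σ
  have := c_sub σ (Nat.zero_le k)
  omega

lemma c_true (σ : ℕ → Bool) {i j : ℕ} (hσ : σ j = true) (h : i < j) :
    cnt σ i < cnt σ j := by
  obtain ⟨k, rfl⟩ : ∃ k, j = k + 1 := ⟨j - 1, by omega⟩
  have h1 := c_mono σ (show i ≤ k by omega)
  rw [cnt_succ, hσ]; simp only [if_true]; omega

lemma c_false (σ : ℕ → Bool) {i j : ℕ} (hσ : σ j = false) (h : i < j) :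
    i + cnt σ j < j + cnt σ i := by
  obtain ⟨k, rfl⟩ : ∃ k, j = k + 1 := ⟨j - 1, by omega⟩
  have h1 := c_sub σ (show i ≤ k by omega)
  rw [cnt_succ, hσ]; simp only [Bool.false_eq_true, if_false]; omega

lemma c_pos (σ : ℕ → Bool) {k : ℕ} (hσ : σ k = true) (hk : 1 ≤ k) : 1 ≤ cnt σ k := by
  have := c_true σ hσ (show 0 < k from hk)
  have := cnt_zero σ
  omega

lemma c_lt (σ : ℕ → Bool) {k : ℕ} (hσ : σ k = false) (hk : 1 ≤ k) : cnt σ k < k := by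
  have := c_false σ hσ (show 0 < k from hk)
  have := cnt_zero σ
  omega

/-- the permutation of `[1,2n]` realizing the linear order attached to `σ`.
`p ∈ [1,n]` is element `a_p`, `p = n+k` is element `b_k`. -/
def perm (n : ℕ) (σ : ℕ → Bool) (p : ℕ) : ℕ :=
  if p ≤ n then
    (if σ p then n - cnt σ n + 2 * cnt σ p - 1 else n + cnt σ n + (p - cnt σ p))
  else
    (if σ (p - n) then n - cnt σ n + 2 * cnt σ (p - n) else (p - n) - cnt σ (p - n))

lemma perm_a (n : ℕ) (σ : ℕ → Bool) {u : ℕ} (h : u ≤ n) :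
    perm n σ u = if σ u then n - cnt σ n + 2 * cnt σ u - 1
      else n + cnt σ n + (u - cnt σ u) := by
  simp [perm, h]

lemma perm_b (n : ℕ) (σ : ℕ → Bool) {k : ℕ} (h : 1 ≤ k) :
    perm n σ (n + k) = if σ k then n - cnt σ n + 2 * cnt σ k
      else k - cnt σ k := by
  have h1 : ¬ (n + k ≤ n) := by omega
  simp [perm, h1]

/-- all basic counting facts needed for one index `u ∈ [1,n]`. -/
lemma cfacts (n : ℕ) (σ : ℕ → Bool) {u : ℕ} (h1 : 1 ≤ u) (h2 : u ≤ n) :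
    cnt σ u ≤ cnt σ n ∧ cnt σ n + u ≤ cnt σ u + n ∧ cnt σ u ≤ u ∧ cnt σ n ≤ n ∧
      (σ u = true → 1 ≤ cnt σ u) ∧ (σ u = false → cnt σ u < u) := by
  refine ⟨c_mono σ h2, c_sub σ h2, c_le σ u, c_le σ n, fun h => c_pos σ h h1,
    fun h => c_lt σ h h1⟩

/-- comparison facts for a pair `i < j`. -/
lemma cfacts2 (σ : ℕ → Bool) {i j : ℕ} (h : i < j) :
    cnt σ i ≤ cnt σ j ∧ cnt σ j + i ≤ cnt σ i + j ∧
      (σ j = true → cnt σ i < cnt σ j) ∧ (σ j = false → i + cnt σ j < j + cnt σ i) := by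
  refine ⟨c_mono σ (by omega), c_sub σ (by omega), fun hσ => c_true σ hσ h,
    fun hσ => c_false σ hσ h⟩

lemma perm_mapsTo (n : ℕ) (σ : ℕ → Bool) :
    Set.MapsTo (perm n σ) (Set.Icc 1 (2*n)) (Set.Icc 1 (2*n)) := by
  rintro p ⟨hp1, hp2⟩
  rcases le_or_gt p n with hp | hp
  · obtain ⟨f1, f2, f3, f4, f5, f6⟩ := cfacts n σ hp1 hp
    rw [Set.mem_Icc, perm_a n σ hp]
    rcases hb : σ p with _|_
    · have := f6 hb; simp only [Bool.false_eq_true, if_false]; omega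
    · have := f5 hb; simp only [if_true]; omega
  · obtain ⟨k, rfl⟩ : ∃ k, p = n + k := ⟨p - n, by omega⟩
    have hk1 : 1 ≤ k := by omega
    have hk2 : k ≤ n := by omega
    obtain ⟨f1, f2, f3, f4, f5, f6⟩ := cfacts n σ hk1 hk2
    rw [Set.mem_Icc, perm_b n σ hk1]
    rcases hb : σ k with _|_
    · have := f6 hb; simp only [Bool.false_eq_true, if_false]; omega
    · have := f5 hb; simp only [if_true]; omega

lemma perm_ne (n : ℕ) (σ : ℕ → Bool) {p q : ℕ} (hp1 : 1 ≤ p) (hq2 : q ≤ 2*n)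
    (hpq : p < q) : perm n σ p ≠ perm n σ q := by
  rcases le_or_gt q n with hq | hq
  · -- both are `a`-type
    have hp : p ≤ n := by omega
    obtain ⟨fp1, fp2, fp3, fp4, fp5, fp6⟩ := cfacts n σ hp1 hp
    obtain ⟨fq1, fq2, fq3, _, fq5, fq6⟩ := cfacts n σ (by omega) hq
    obtain ⟨g1, g2, g3, g4⟩ := cfacts2 σ hpq
    rw [perm_a n σ hp, perm_a n σ hq]
    rcases hbp : σ p with _|_ <;> rcases hbq : σ q with _|_ <;>
      simp only [Bool.false_eq_true, if_false, if_true]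
    · have := fp6 hbp; have := fq6 hbq; have := g4 hbq; omega
    · have := fp6 hbp; have := fq5 hbq; omega
    · have := fp5 hbp; have := fq6 hbq; omega
    · have := fp5 hbp; have := fq5 hbq; have := g3 hbq; omega
  · obtain ⟨l, rfl⟩ : ∃ l, q = n + l := ⟨q - n, by omega⟩
    have hl1 : 1 ≤ l := by omega
    have hl2 : l ≤ n := by omega
    obtain ⟨fq1, fq2, fq3, fq4, fq5, fq6⟩ := cfacts n σ hl1 hl2
    rcases le_or_gt p n with hp | hp
    · -- p is a-type, q = b_l
      obtain ⟨fp1, fp2, fp3, _, fp5, fp6⟩ := cfacts n σ hp1 hp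
      rw [perm_a n σ hp, perm_b n σ hl1]
      rcases hbp : σ p with _|_ <;> rcases hbq : σ l with _|_ <;>
        simp only [Bool.false_eq_true, if_false, if_true]
      · have := fp6 hbp; have := fq6 hbq; omega
      · have := fp6 hbp; have := fq5 hbq; omega
      · have := fp5 hbp; have := fq6 hbq; omega
      · -- both selected: n-s+2c_p-1 vs n-s+2c_l : parity
        have := fp5 hbp; have := fq5 hbq; omega
    · obtain ⟨k, rfl⟩ : ∃ k, p = n + k := ⟨p - n, by omega⟩
      have hk1 : 1 ≤ k := by omega
      have hkl : k < l := by omega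
      obtain ⟨fp1, fp2, fp3, _, fp5, fp6⟩ := cfacts n σ hk1 (by omega)
      obtain ⟨g1, g2, g3, g4⟩ := cfacts2 σ hkl
      rw [perm_b n σ hk1, perm_b n σ hl1]
      rcases hbp : σ k with _|_ <;> rcases hbq : σ l with _|_ <;>
        simp only [Bool.false_eq_true, if_false, if_true]
      · have := fp6 hbp; have := fq6 hbq; have := g4 hbq; omega
      · have := fp6 hbp; have := fq5 hbq; omega
      · have := fp5 hbp; have := fq6 hbq; omega
      · have := fp5 hbp; have := fq5 hbq; have := g3 hbq; omega

lemma perm_bijOn (n : ℕ) (σ : ℕ → Bool) :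
    Set.BijOn (perm n σ) (Set.Icc 1 (2*n)) (Set.Icc 1 (2*n)) := by
  have hfin : (Set.Icc 1 (2*n)).Finite := Set.finite_Icc _ _
  refine (hfin.injOn_iff_bijOn_of_mapsTo (perm_mapsTo n σ)).mp ?_
  rintro p ⟨hp1, hp2⟩ q ⟨hq1, hq2⟩ hpq
  by_contra hne
  rcases Nat.lt_or_ge p q with h | h
  · exact perm_ne n σ hp1 hq2 h hpq
  · exact perm_ne n σ hq1 hp2 (by omega) hpq.symm

/-- per-quadruple upper bound. -/
lemma quad_le {p1 p2 p3 p4 : ℕ} (h12 : p1 ≠ p2) (h13 : p1 ≠ p3) (h14 : p1 ≠ p4)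
    (h23 : p2 ≠ p3) (h24 : p2 ≠ p4) (h34 : p3 ≠ p4) :
    (if p1 < p2 then (1:ℝ) else 0) + (if p3 < p4 then (1:ℝ) else 0)
      + (if p1 < p3 then (1:ℝ) else 0) - 2 * (if p1 < p4 then (1:ℝ) else 0)
      - (if p3 < p2 then (1:ℝ) else 0) + (if p2 < p4 then (1:ℝ) else 0) ≤ 2 := by
  split_ifs <;> (try norm_num) <;> omega

/-- per-quadruple equality characterization. -/
lemma quad_eq {p1 p2 p3 p4 : ℕ} (h12 : p1 ≠ p2) (h13 : p1 ≠ p3) (h14 : p1 ≠ p4)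
    (h23 : p2 ≠ p3) (h24 : p2 ≠ p4) (h34 : p3 ≠ p4)
    (h : (if p1 < p2 then (1:ℝ) else 0) + (if p3 < p4 then (1:ℝ) else 0)
      + (if p1 < p3 then (1:ℝ) else 0) - 2 * (if p1 < p4 then (1:ℝ) else 0)
      - (if p3 < p2 then (1:ℝ) else 0) + (if p2 < p4 then (1:ℝ) else 0) = 2) :
    (p1 < p3 ↔ (p1 < p2 ∨ ¬ p3 < p4)) ∧ (p1 < p4 ↔ (p1 < p2 ∧ p3 < p4)) ∧
      p2 < p3 ∧ (p2 < p4 ↔ (¬ p1 < p2 ∨ p3 < p4)) := by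
  split_ifs at h <;> (try norm_num at h) <;> omega

/-- the BQP vertex attached to a set of selected indices. -/
def xx (n : ℕ) (σ : ℕ → Bool) : ℕ → ℕ → ℝ := fun i j =>
  if 1 ≤ i ∧ i ≤ j ∧ j ≤ n ∧ σ i ∧ σ j then 1 else 0

/-- the LOP vertex attached to a set of selected indices. -/
def yy (n : ℕ) (σ : ℕ → Bool) : ℕ → ℕ → ℝ := fun u v =>
  if 1 ≤ u ∧ u < v ∧ v ≤ n then (if σ v then (if σ u then 1 else 0) else 1)
  else if 1 ≤ u ∧ u ≤ n ∧ n < v ∧ v ≤ 2*n then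
    (if u = v - n then (if σ u then 1 else 0)
     else if u < v - n then (if σ u ∧ σ (v-n) then 1 else 0)
     else 0)
  else if n < u ∧ u < v ∧ v ≤ 2*n then (if σ (u-n) then (if σ (v-n) then 1 else 0) else 1)
  else 0

lemma yy_A {n : ℕ} (σ : ℕ → Bool) {i j : ℕ} (h1 : 1 ≤ i) (h2 : i < j) (h3 : j ≤ n) :
    yy n σ i j = (if σ j then (if σ i then 1 else 0) else 1) := by
  simp only [yy]; rw [if_pos ⟨h1, h2, h3⟩]

lemma yy_E {n : ℕ} (σ : ℕ → Bool) {i : ℕ} (h1 : 1 ≤ i) (h2 : i ≤ n) :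
    yy n σ i (n + i) = (if σ i then 1 else 0) := by
  simp only [yy]
  rw [if_neg (by omega), if_pos (by omega), if_pos (by omega)]

lemma yy_B {n : ℕ} (σ : ℕ → Bool) {i j : ℕ} (h1 : 1 ≤ i) (h2 : i < j) (h3 : j ≤ n) :
    yy n σ i (n + j) = (if σ i ∧ σ j then 1 else 0) := by
  simp only [yy]
  rw [if_neg (by omega), if_pos (by omega), if_neg (by omega), if_pos (by omega)]
  have : n + j - n = j := by omega
  rw [this]

lemma yy_C {n : ℕ} (σ : ℕ → Bool) {i j : ℕ} (h1 : 1 ≤ i) (h2 : i < j) (h3 : j ≤ n) :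
    yy n σ j (n + i) = 0 := by
  simp only [yy]
  rw [if_neg (by omega), if_pos (by omega), if_neg (by omega), if_neg (by omega)]

lemma yy_D {n : ℕ} (σ : ℕ → Bool) {i j : ℕ} (h1 : 1 ≤ i) (h2 : i < j) (h3 : j ≤ n) :
    yy n σ (n + i) (n + j) = (if σ i then (if σ j then 1 else 0) else 1) := by
  simp only [yy]
  rw [if_neg (by omega), if_neg (by omega), if_pos (by omega)]
  have hi : n + i - n = i := by omega
  have hj : n + j - n = j := by omega
  rw [hi, hj]

lemma yy_zero {n : ℕ} (σ : ℕ → Bool) {u v : ℕ} (h : ¬(1 ≤ u ∧ u < v ∧ v ≤ 2*n)) :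
    yy n σ u v = 0 := by
  simp only [yy]
  rw [if_neg (by omega), if_neg (by omega), if_neg (by omega)]

/-- `yy n σ` is the characteristic vector of the linear order `perm n σ`. -/
lemma yy_mem_LOP (n : ℕ) (σ : ℕ → Bool) : yy n σ ∈ LOP (2*n) := by
  refine ⟨fun i j h => yy_zero σ h, perm n σ, perm_bijOn n σ, ?_⟩
  intro u v hu huv hv
  rcases le_or_gt v n with hvn | hvn
  · -- region A
    obtain ⟨fu1, fu2, fu3, fu4, fu5, fu6⟩ := cfacts n σ hu (by omega)
    obtain ⟨fv1, fv2, fv3, _, fv5, fv6⟩ := cfacts n σ (by omega) hvn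
    obtain ⟨g1, g2, g3, g4⟩ := cfacts2 σ huv
    rw [yy_A σ hu huv hvn, perm_a n σ (by omega), perm_a n σ hvn]
    rcases hbu : σ u with _|_ <;> rcases hbv : σ v with _|_ <;>
      simp only [Bool.false_eq_true, if_false, if_true]
    · have := fu6 hbu; have := fv6 hbv; have := g4 hbv
      rw [if_pos (by omega)]
    · have := fu6 hbu; have := fv5 hbv
      rw [if_neg (by omega)]
    · have := fu5 hbu; have := fv6 hbv
      rw [if_pos (by omega)]
    · have := fu5 hbu; have := fv5 hbv; have := g3 hbv
      rw [if_pos (by omega)]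
  · -- v = n + k
    obtain ⟨k, rfl⟩ : ∃ k, v = n + k := ⟨v - n, by omega⟩
    have hk1 : 1 ≤ k := by omega
    have hk2 : k ≤ n := by omega
    obtain ⟨fk1, fk2, fk3, fk4, fk5, fk6⟩ := cfacts n σ hk1 hk2
    rcases le_or_gt u n with hun | hun
    · rcases lt_trichotomy u k with hc | hc | hc
      · -- u < k : region B
        obtain ⟨fu1, fu2, fu3, _, fu5, fu6⟩ := cfacts n σ hu hun
        obtain ⟨g1, g2, g3, g4⟩ := cfacts2 σ hc
        rw [yy_B σ hu hc hk2, perm_a n σ hun, perm_b n σ hk1]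
        rcases hbu : σ u with _|_ <;> rcases hbk : σ k with _|_ <;>
          simp only [Bool.false_eq_true, if_false, if_true, true_and, false_and]
        · have := fu6 hbu; have := fk6 hbk; have := g4 hbk
          rw [if_neg (by omega)]
        · have := fu6 hbu; have := fk5 hbk
          rw [if_neg (by omega)]
        · have := fu5 hbu; have := fk6 hbk
          rw [if_neg (by omega)]
        · have := fu5 hbu; have := fk5 hbk; have := g3 hbk
          rw [if_pos (by omega)]
      · -- u = k : region E
        subst hc
        rw [yy_E σ hu (by omega), perm_a n σ (by omega), perm_b n σ hk1]
        rcases hbu : σ u with _|_ <;>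
          simp only [Bool.false_eq_true, if_false, if_true]
        · have := fk6 hbu
          rw [if_neg (by omega)]
        · have := fk5 hbu
          rw [if_pos (by omega)]
      · -- k < u : region C
        have hun : u ≤ n := by omega
        obtain ⟨fu1, fu2, fu3, _, fu5, fu6⟩ := cfacts n σ (by omega) hun
        obtain ⟨g1, g2, g3, g4⟩ := cfacts2 σ hc
        rw [yy_C σ hk1 hc hun, perm_a n σ hun, perm_b n σ hk1]
        rcases hbu : σ u with _|_ <;> rcases hbk : σ k with _|_ <;>
          simp only [Bool.false_eq_true, if_false, if_true]
        · have := fu6 hbu; have := fk6 hbk; have := g4 hbu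
          rw [if_neg (by omega)]
        · have := fu6 hbu; have := fk5 hbk
          rw [if_neg (by omega)]
        · have := fu5 hbu; have := fk6 hbk
          rw [if_neg (by omega)]
        · have := fu5 hbu; have := fk5 hbk; have := g3 hbu
          rw [if_neg (by omega)]

    · -- region D : u = n + i
      obtain ⟨i, rfl⟩ : ∃ i, u = n + i := ⟨u - n, by omega⟩
      have hi1 : 1 ≤ i := by omega
      have hik : i < k := by omega
      obtain ⟨fi1, fi2, fi3, _, fi5, fi6⟩ := cfacts n σ hi1 (by omega)
      obtain ⟨g1, g2, g3, g4⟩ := cfacts2 σ hik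
      rw [yy_D σ hi1 hik hk2, perm_b n σ hi1, perm_b n σ hk1]
      rcases hbi : σ i with _|_ <;> rcases hbk : σ k with _|_ <;>
        simp only [Bool.false_eq_true, if_false, if_true]
      · have := fi6 hbi; have := fk6 hbk; have := g4 hbk
        rw [if_pos (by omega)]
      · have := fi6 hbi; have := fk5 hbk
        rw [if_pos (by omega)]
      · have := fi5 hbi; have := fk6 hbk
        rw [if_neg (by omega)]
      · have := fi5 hbi; have := fk5 hbk; have := g3 hbk
        rw [if_pos (by omega)]

/-- linear part of the embedding. -/
def Lfun (n : ℕ) (x : ℕ → ℕ → ℝ) : ℕ → ℕ → ℝ := fun u v =>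
  if 1 ≤ u ∧ u < v ∧ v ≤ n then - x v v + x u v + x v u
  else if 1 ≤ u ∧ u = v ∧ v ≤ n then x u (n + u)
  else if 1 ≤ u ∧ u ≤ n ∧ n < v ∧ v ≤ 2*n then
    (if u = v - n then x u u + x (n + u) u
     else if u < v - n then x u (v - n) + x u v
     else x u v)
  else if n < u ∧ u < v ∧ v ≤ 2*n then - x (u-n) (u-n) + x (u-n) (v-n) + x u v
  else x u v

lemma Lfun_A {n : ℕ} (x : ℕ → ℕ → ℝ) {u v : ℕ} (h1 : 1 ≤ u) (h2 : u < v) (h3 : v ≤ n) :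
    Lfun n x u v = - x v v + x u v + x v u := by
  simp only [Lfun]; rw [if_pos ⟨h1, h2, h3⟩]

lemma Lfun_G {n : ℕ} (x : ℕ → ℕ → ℝ) {u : ℕ} (h1 : 1 ≤ u) (h2 : u ≤ n) :
    Lfun n x u u = x u (n + u) := by
  simp only [Lfun]; rw [if_neg (by omega), if_pos ⟨h1, trivial, h2⟩]

lemma Lfun_E {n : ℕ} (x : ℕ → ℕ → ℝ) {u : ℕ} (h1 : 1 ≤ u) (h2 : u ≤ n) :
    Lfun n x u (n + u) = x u u + x (n + u) u := by
  simp only [Lfun]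
  rw [if_neg (by omega), if_neg (by omega), if_pos (by omega), if_pos (by omega)]

lemma Lfun_B {n : ℕ} (x : ℕ → ℕ → ℝ) {u k : ℕ} (h1 : 1 ≤ u) (h2 : u < k) (h3 : k ≤ n) :
    Lfun n x u (n + k) = x u k + x u (n + k) := by
  simp only [Lfun]
  rw [if_neg (by omega), if_neg (by omega), if_pos (by omega), if_neg (by omega),
    if_pos (by omega)]
  have h : n + k - n = k := by omega
  rw [h]

lemma Lfun_C {n : ℕ} (x : ℕ → ℕ → ℝ) {u k : ℕ} (h1 : 1 ≤ k) (h2 : k < u) (h3 : u ≤ n) :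
    Lfun n x u (n + k) = x u (n + k) := by
  simp only [Lfun]
  rw [if_neg (by omega), if_neg (by omega), if_pos (by omega), if_neg (by omega),
    if_neg (by omega)]

lemma Lfun_D {n : ℕ} (x : ℕ → ℕ → ℝ) {u v : ℕ} (h1 : n < u) (h2 : u < v) (h3 : v ≤ 2*n) :
    Lfun n x u v = - x (u-n) (u-n) + x (u-n) (v-n) + x u v := by
  simp only [Lfun]
  rw [if_neg (by omega), if_neg (by omega), if_neg (by omega), if_pos ⟨h1, h2, h3⟩]

lemma Lfun_else {n : ℕ} (x : ℕ → ℕ → ℝ) {u v : ℕ} (h1 : ¬(1 ≤ u ∧ u < v ∧ v ≤ n))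
    (h2 : ¬(1 ≤ u ∧ u = v ∧ v ≤ n)) (h3 : ¬(1 ≤ u ∧ u ≤ n ∧ n < v ∧ v ≤ 2*n))
    (h4 : ¬(n < u ∧ u < v ∧ v ≤ 2*n)) : Lfun n x u v = x u v := by
  simp only [Lfun]; rw [if_neg h1, if_neg h2, if_neg h3, if_neg h4]

/-- constant part of the embedding. -/
def Cvec (n : ℕ) : ℕ → ℕ → ℝ := fun u v =>
  if (1 ≤ u ∧ u < v ∧ v ≤ n) ∨ (n < u ∧ u < v ∧ v ≤ 2*n) then 1 else 0

noncomputable def Lmap (n : ℕ) : (ℕ → ℕ → ℝ) →ₗ[ℝ] (ℕ → ℕ → ℝ) where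
  toFun := Lfun n
  map_add' x y := by
    funext u v
    simp only [Lfun, Pi.add_apply]
    split_ifs <;> ring
  map_smul' c x := by
    funext u v
    simp only [Lfun, Pi.smul_apply, smul_eq_mul, RingHom.id_apply]
    split_ifs <;> ring

/-- the affine embedding. -/
noncomputable def Amap (n : ℕ) : (ℕ → ℕ → ℝ) →ᵃ[ℝ] (ℕ → ℕ → ℝ) where
  toFun := fun x => Cvec n + Lmap n x
  linear := Lmap n
  map_vadd' p v := by
    simp only [vadd_eq_add, map_add]
    funext u w
    simp only [Pi.add_apply]
    ring

lemma Amap_apply (n : ℕ) (x : ℕ → ℕ → ℝ) (u v : ℕ) :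
    Amap n x u v = Cvec n u v + Lfun n x u v := rfl

lemma Amap_injective (n : ℕ) : Function.Injective (Amap n) := by
  intro x x' hxx
  have H : ∀ u v, Lfun n x u v = Lfun n x' u v := by
    intro u v
    have h1 := congrFun (congrFun (congrArg (fun (f : (ℕ → ℕ → ℝ)) => f) hxx) u) v
    simpa [Amap_apply] using h1
  have hElse : ∀ u v : ℕ, ¬(1 ≤ u ∧ u < v ∧ v ≤ n) → ¬(1 ≤ u ∧ u = v ∧ v ≤ n) →
      ¬(1 ≤ u ∧ u ≤ n ∧ n < v ∧ v ≤ 2*n) → ¬(n < u ∧ u < v ∧ v ≤ 2*n) →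
      x u v = x' u v := by
    intro u v h1 h2 h3 h4
    have h := H u v
    rwa [Lfun_else x h1 h2 h3 h4, Lfun_else x' h1 h2 h3 h4] at h
  have hLow : ∀ u v : ℕ, v < u → x u v = x' u v := by
    intro u v h
    exact hElse u v (by omega) (by omega) (by omega) (by omega)
  have hDiag : ∀ u : ℕ, 1 ≤ u → u ≤ n → x u u = x' u u := by
    intro u h1 h2
    have h := H u (n + u)
    rw [Lfun_E x h1 h2, Lfun_E x' h1 h2] at h
    have := hLow (n + u) u (by omega)
    linarith
  have hA : ∀ u v : ℕ, 1 ≤ u → u < v → v ≤ n → x u v = x' u v := by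
    intro u v h1 h2 h3
    have h := H u v
    rw [Lfun_A x h1 h2 h3, Lfun_A x' h1 h2 h3] at h
    have e1 := hDiag v (by omega) h3
    have e2 := hLow v u h2
    linarith
  funext u v
  rcases Nat.lt_or_ge v u with hvu | huv
  · exact hLow u v hvu
  rcases Nat.eq_zero_or_pos u with hu0 | hu1
  · exact hElse u v (by omega) (by omega) (by omega) (by omega)
  rcases le_or_gt v n with hvn | hvn
  · rcases Nat.lt_or_ge u v with h | h
    · exact hA u v hu1 h hvn
    · have : u = v := by omega
      subst this
      exact hDiag u hu1 hvn
  rcases le_or_gt v (2*n) with hv2n | hv2n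
  swap
  · exact hElse u v (by omega) (by omega) (by omega) (by omega)
  rcases le_or_gt u n with hun | hun
  · -- u ≤ n < v ≤ 2n, write v = n + k
    obtain ⟨k, rfl⟩ : ∃ k, v = n + k := ⟨v - n, by omega⟩
    have hk1 : 1 ≤ k := by omega
    have hk2 : k ≤ n := by omega
    have h := H u (n + k)
    rcases lt_trichotomy u k with hc | hc | hc
    · rw [Lfun_B x hu1 hc hk2, Lfun_B x' hu1 hc hk2] at h
      have := hA u k hu1 hc hk2
      linarith
    · subst hc
      have h' := H u u
      rw [Lfun_G x hu1 hun, Lfun_G x' hu1 hun] at h'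
      exact h'
    · rw [Lfun_C x hk1 hc hun, Lfun_C x' hk1 hc hun] at h
      exact h
  · -- region D
    rcases Nat.eq_or_lt_of_le huv with hEq | hlt
    · subst hEq
      exact hElse u u (by omega) (by omega) (by omega) (by omega)
    have h := H u v
    rw [Lfun_D x hun hlt hv2n, Lfun_D x' hun hlt hv2n] at h
    have e1 := hDiag (u - n) (by omega) (by omega)
    have e2 : x (u-n) (v-n) = x' (u-n) (v-n) := by
      rcases lt_trichotomy (u-n) (v-n) with hc | hc | hc
      · exact hA _ _ (by omega) hc (by omega)
      · rw [hc]; exact hDiag (v-n) (by omega) (by omega)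
      · exact hLow _ _ hc
    linarith

lemma xx_eval (n : ℕ) (σ : ℕ → Bool) {i j : ℕ} (h1 : 1 ≤ i) (h2 : i ≤ j) (h3 : j ≤ n) :
    xx n σ i j = if σ i ∧ σ j then 1 else 0 := by
  simp only [xx]
  by_cases h : σ i ∧ σ j
  · rw [if_pos ⟨h1, h2, h3, h.1, h.2⟩, if_pos h]
  · rw [if_neg (by tauto), if_neg h]

lemma xx_out (n : ℕ) (σ : ℕ → Bool) {i j : ℕ} (h : ¬(1 ≤ i ∧ i ≤ j ∧ j ≤ n)) :
    xx n σ i j = 0 := by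
  simp only [xx]
  rw [if_neg (by tauto)]

lemma Cvec_A {n : ℕ} {u v : ℕ} (h1 : 1 ≤ u) (h2 : u < v) (h3 : v ≤ n) :
    Cvec n u v = 1 := by
  simp only [Cvec]; rw [if_pos (Or.inl ⟨h1, h2, h3⟩)]

lemma Cvec_D {n : ℕ} {u v : ℕ} (h1 : n < u) (h2 : u < v) (h3 : v ≤ 2*n) :
    Cvec n u v = 1 := by
  simp only [Cvec]; rw [if_pos (Or.inr ⟨h1, h2, h3⟩)]

lemma Cvec_out {n : ℕ} {u v : ℕ} (h1 : ¬(1 ≤ u ∧ u < v ∧ v ≤ n))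
    (h2 : ¬(n < u ∧ u < v ∧ v ≤ 2*n)) : Cvec n u v = 0 := by
  simp only [Cvec]; rw [if_neg (by tauto)]

/-- the affine map sends the BQP vertex to the LOP vertex. -/
lemma Amap_xx (n : ℕ) (σ : ℕ → Bool) : Amap n (xx n σ) = yy n σ := by
  funext u v
  rw [Amap_apply]
  by_cases hR : 1 ≤ u ∧ u < v ∧ v ≤ 2*n
  · obtain ⟨hu, huv, hv⟩ := hR
    rcases le_or_gt v n with hvn | hvn
    · -- region A
      rw [Cvec_A hu huv hvn, Lfun_A _ hu huv hvn, yy_A σ hu huv hvn,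
        xx_eval n σ (by omega) (le_refl v) hvn, xx_eval n σ hu (by omega) hvn,
        xx_out n σ (by omega)]
      rcases hbu : σ u with _|_ <;> rcases hbv : σ v with _|_ <;> norm_num [hbu, hbv]
    · obtain ⟨k, rfl⟩ : ∃ k, v = n + k := ⟨v - n, by omega⟩
      have hk1 : 1 ≤ k := by omega
      have hk2 : k ≤ n := by omega
      rcases le_or_gt u n with hun | hun
      · rcases lt_trichotomy u k with hc | hc | hc
        · -- region B
          rw [Cvec_out (by omega) (by omega), Lfun_B _ hu hc hk2, yy_B σ hu hc hk2,
            xx_eval n σ hu (by omega) hk2, xx_out n σ (by omega)]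
          norm_num
        · -- region E
          subst hc
          rw [Cvec_out (by omega) (by omega), Lfun_E _ hu hun, yy_E σ hu hun,
            xx_eval n σ hu (le_refl u) hun, xx_out n σ (by omega)]
          rcases hbu : σ u with _|_ <;> norm_num [hbu]
        · -- region C
          rw [Cvec_out (by omega) (by omega), Lfun_C _ hk1 hc hun, yy_C σ hk1 hc hun,
            xx_out n σ (by omega)]
          norm_num
      · -- region D
        obtain ⟨i, rfl⟩ : ∃ i, u = n + i := ⟨u - n, by omega⟩
        have hi1 : 1 ≤ i := by omega
        have hik : i < k := by omega
        rw [Cvec_D hun huv hv, Lfun_D _ hun huv hv, yy_D σ hi1 hik hk2]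
        have e : n + k - n = k := by omega
        have e2 : n + i - n = i := by omega
        rw [e, e2, xx_eval n σ hi1 (le_refl i) (by omega),
          xx_eval n σ hi1 (by omega) hk2, xx_out n σ (by omega)]
        rcases hbu : σ i with _|_ <;> rcases hbv : σ k with _|_ <;> norm_num [hbu, hbv]
  · -- outside range
    rw [yy_zero σ hR]
    by_cases hG : 1 ≤ u ∧ u = v ∧ v ≤ n
    · obtain ⟨hu, rfl, hv⟩ := hG
      rw [Cvec_out (by omega) (by omega), Lfun_G _ hu hv, xx_out n σ (by omega)]
      norm_num
    · rw [Cvec_out (by omega) (by omega), Lfun_else _ (by omega) hG (by omega) (by omega),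
        xx_out n σ (by omega)]
      norm_num

lemma xx_mem_BQP (n : ℕ) (σ : ℕ → Bool) : xx n σ ∈ BQP n := by
  refine ⟨fun i j h => xx_out n σ h, ?_, ?_⟩
  · intro i j h1 h2 h3
    rw [xx_eval n σ h1 h2 h3]
    split_ifs <;> simp
  · intro i j h1 h2 h3
    rw [xx_eval n σ h1 (by omega) h3, xx_eval n σ h1 (le_refl i) (by omega),
      xx_eval n σ (by omega) (le_refl j) h3]
    rcases hbi : σ i with _|_ <;> rcases hbj : σ j with _|_ <;> norm_num [hbi, hbj]

lemma BQP_sub (n : ℕ) {x : ℕ → ℕ → ℝ} (hx : x ∈ BQP n) :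
    ∃ σ : ℕ → Bool, x = xx n σ := by
  obtain ⟨h0, h01, hprod⟩ := hx
  set σ : ℕ → Bool := fun i => decide (x i i = 1) with hσ
  have hdiag : ∀ i, 1 ≤ i → i ≤ n → x i i = (if σ i then (1:ℝ) else 0) := by
    intro i h1 h2
    by_cases hb : x i i = 1
    · simp [hσ, hb]
    · rcases h01 i i h1 (le_refl i) h2 with h | h
      · simp [hσ, hb, h]
      · exact absurd h hb
  refine ⟨σ, ?_⟩
  funext i j
  by_cases hR : 1 ≤ i ∧ i ≤ j ∧ j ≤ n
  · obtain ⟨h1, h2, h3⟩ := hR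
    rw [xx_eval n σ h1 h2 h3]
    rcases Nat.eq_or_lt_of_le h2 with rfl | hlt
    · rw [hdiag i h1 h3]
      rcases hb : σ i with _|_ <;> norm_num [hb]
    · rw [hprod i j h1 hlt h3, hdiag i h1 (by omega), hdiag j (by omega) h3]
      rcases hbi : σ i with _|_ <;> rcases hbj : σ j with _|_ <;> norm_num [hbi, hbj]
  · rw [h0 i j hR, xx_out n σ hR]

def Yset (n : ℕ) : Set (ℕ → ℕ → ℝ) := {y | ∃ σ : ℕ → Bool, y = yy n σ}

noncomputable def ev (u v : ℕ) : (ℕ → ℕ → ℝ) →L[ℝ] ℝ :=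
  (ContinuousLinearMap.proj v : (ℕ → ℝ) →L[ℝ] ℝ).comp
    (ContinuousLinearMap.proj u : (ℕ → ℕ → ℝ) →L[ℝ] (ℕ → ℝ))

lemma ev_apply (u v : ℕ) (y : ℕ → ℕ → ℝ) : ev u v y = y u v := rfl

def pairs (n : ℕ) : Finset (ℕ × ℕ) :=
  (Finset.Icc 1 n ×ˢ Finset.Icc 1 n).filter fun p => p.1 < p.2

lemma mem_pairs {n : ℕ} {p : ℕ × ℕ} : p ∈ pairs n ↔ 1 ≤ p.1 ∧ p.1 < p.2 ∧ p.2 ≤ n := by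
  simp only [pairs, Finset.mem_filter, Finset.mem_product, Finset.mem_Icc]
  omega

/-- the contribution of the pair `p = (i,j)` to the exposing functional. -/
def term (n : ℕ) (p : ℕ × ℕ) (y : ℕ → ℕ → ℝ) : ℝ :=
  y p.1 (n+p.1) + y p.2 (n+p.2) + y p.1 p.2 - 2 * y p.1 (n+p.2) - y p.2 (n+p.1)
    + y (n+p.1) (n+p.2)

noncomputable def lfunc (n : ℕ) : (ℕ → ℕ → ℝ) →L[ℝ] ℝ :=
  ∑ p ∈ pairs n, (ev p.1 (n+p.1) + ev p.2 (n+p.2) + ev p.1 p.2 - (2:ℝ) • ev p.1 (n+p.2)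
    - ev p.2 (n+p.1) + ev (n+p.1) (n+p.2))

lemma lfunc_apply (n : ℕ) (y : ℕ → ℕ → ℝ) : lfunc n y = ∑ p ∈ pairs n, term n p y := by
  rw [lfunc, ContinuousLinearMap.sum_apply]
  refine Finset.sum_congr rfl fun p _ => ?_
  simp only [ContinuousLinearMap.add_apply, ContinuousLinearMap.sub_apply,
    ContinuousLinearMap.smul_apply, ev_apply, smul_eq_mul, term]

lemma term_yy (n : ℕ) (σ : ℕ → Bool) {p : ℕ × ℕ} (hp : p ∈ pairs n) :
    term n p (yy n σ) = 2 := by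
  obtain ⟨i, j⟩ := p
  obtain ⟨h1, h2, h3⟩ := mem_pairs.mp hp
  dsimp only at h1 h2 h3
  rw [term]
  dsimp only
  rw [yy_E σ h1 (by omega), yy_E σ (by omega) h3, yy_A σ h1 h2 h3, yy_B σ h1 h2 h3,
    yy_C σ h1 h2 h3, yy_D σ h1 h2 h3]
  rcases hbi : σ i with _|_ <;> rcases hbj : σ j with _|_ <;> norm_num [hbi, hbj]

lemma term_le (n : ℕ) {y : ℕ → ℕ → ℝ} (hy : y ∈ LOP (2*n)) {p : ℕ × ℕ}
    (hp : p ∈ pairs n) : term n p y ≤ 2 := by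
  obtain ⟨hz, π, hbij, hcoord⟩ := hy
  obtain ⟨i, j⟩ := p
  obtain ⟨h1, h2, h3⟩ := mem_pairs.mp hp
  dsimp only at h1 h2 h3
  have hd : ∀ a b : ℕ, 1 ≤ a → a ≤ 2*n → 1 ≤ b → b ≤ 2*n → a ≠ b → π a ≠ π b := by
    intro a b ha1 ha2 hb1 hb2 hab h
    exact hab (hbij.injOn ⟨ha1, ha2⟩ ⟨hb1, hb2⟩ h)
  rw [term]
  dsimp only
  rw [hcoord i (n+i) h1 (by omega) (by omega),
    hcoord j (n+j) (by omega) (by omega) (by omega),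
    hcoord i j h1 h2 (by omega),
    hcoord i (n+j) h1 (by omega) (by omega),
    hcoord j (n+i) (by omega) (by omega) (by omega),
    hcoord (n+i) (n+j) (by omega) (by omega) (by omega)]
  exact quad_le
    (hd i (n+i) (by omega) (by omega) (by omega) (by omega) (by omega))
    (hd i j (by omega) (by omega) (by omega) (by omega) (by omega))
    (hd i (n+j) (by omega) (by omega) (by omega) (by omega) (by omega))
    (hd (n+i) j (by omega) (by omega) (by omega) (by omega) (by omega))
    (hd (n+i) (n+j) (by omega) (by omega) (by omega) (by omega) (by omega))
    (hd j (n+j) (by omega) (by omega) (by omega) (by omega) (by omega))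

lemma max_terms (n : ℕ) {y : ℕ → ℕ → ℝ} (hy : y ∈ LOP (2*n))
    (hM : lfunc n y = lfunc n (yy n (fun _ => true))) :
    ∀ p ∈ pairs n, term n p y = 2 := by
  have h0 : ∑ p ∈ pairs n, ((2:ℝ) - term n p y) = 0 := by
    rw [Finset.sum_sub_distrib]
    rw [lfunc_apply, lfunc_apply] at hM
    have h2 : ∑ p ∈ pairs n, term n p (yy n (fun _ => true)) = ∑ p ∈ pairs n, (2:ℝ) :=
      Finset.sum_congr rfl fun p hp => term_yy n _ hp
    rw [hM, h2]
    ring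
  have hnn : ∀ p ∈ pairs n, 0 ≤ (2:ℝ) - term n p y := by
    intro p hp
    have := term_le n hy hp
    linarith
  intro p hp
  have := (Finset.sum_eq_zero_iff_of_nonneg hnn).mp h0 p hp
  linarith

lemma eq_yy_of_max (n : ℕ) {y : ℕ → ℕ → ℝ} (hy : y ∈ LOP (2*n))
    (hmax : ∀ p ∈ pairs n, term n p y = 2) : ∃ σ : ℕ → Bool, y = yy n σ := by
  obtain ⟨hz, π, hbij, hcoord⟩ := hy
  have hd : ∀ a b : ℕ, 1 ≤ a → a ≤ 2*n → 1 ≤ b → b ≤ 2*n → a ≠ b → π a ≠ π b := by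
    intro a b ha1 ha2 hb1 hb2 hab h
    exact hab (hbij.injOn ⟨ha1, ha2⟩ ⟨hb1, hb2⟩ h)
  have key : ∀ i j : ℕ, 1 ≤ i → i < j → j ≤ n →
      ((π i < π j ↔ (π i < π (n+i) ∨ ¬ π j < π (n+j))) ∧
       (π i < π (n+j) ↔ (π i < π (n+i) ∧ π j < π (n+j))) ∧
       π (n+i) < π j ∧
       (π (n+i) < π (n+j) ↔ (¬ π i < π (n+i) ∨ π j < π (n+j)))) := by
    intro i j h1 h2 h3
    have ht := hmax (i, j) (mem_pairs.mpr ⟨h1, h2, h3⟩)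
    rw [term] at ht
    dsimp only at ht
    rw [hcoord i (n+i) h1 (by omega) (by omega),
      hcoord j (n+j) (by omega) (by omega) (by omega),
      hcoord i j h1 h2 (by omega),
      hcoord i (n+j) h1 (by omega) (by omega),
      hcoord j (n+i) (by omega) (by omega) (by omega),
      hcoord (n+i) (n+j) (by omega) (by omega) (by omega)] at ht
    exact quad_eq
      (hd i (n+i) (by omega) (by omega) (by omega) (by omega) (by omega))
      (hd i j (by omega) (by omega) (by omega) (by omega) (by omega))
      (hd i (n+j) (by omega) (by omega) (by omega) (by omega) (by omega))
      (hd (n+i) j (by omega) (by omega) (by omega) (by omega) (by omega))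
      (hd (n+i) (n+j) (by omega) (by omega) (by omega) (by omega) (by omega))
      (hd j (n+j) (by omega) (by omega) (by omega) (by omega) (by omega)) ht
  refine ⟨fun k => decide (π k < π (n+k)), ?_⟩
  funext u v
  by_cases hR : 1 ≤ u ∧ u < v ∧ v ≤ 2*n
  swap
  · rw [hz u v hR, yy_zero _ hR]
  obtain ⟨hu, huv, hv⟩ := hR
  rcases le_or_gt v n with hvn | hvn
  · -- region A
    obtain ⟨k1, -, -, -⟩ := key u v hu huv hvn
    rw [hcoord u v hu huv (by omega), yy_A _ hu huv hvn]
    by_cases pu : π u < π (n+u) <;> by_cases pv : π v < π (n+v)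
    · rw [if_pos (k1.mpr (Or.inl pu))]; simp [pu, pv]
    · rw [if_pos (k1.mpr (Or.inr pv))]; simp [pu, pv]
    · rw [if_neg (fun h => by rcases k1.mp h with h' | h' <;> tauto)]; simp [pu, pv]
    · rw [if_pos (k1.mpr (Or.inr pv))]; simp [pu, pv]
  · obtain ⟨k, rfl⟩ : ∃ k, v = n + k := ⟨v - n, by omega⟩
    have hk1 : 1 ≤ k := by omega
    have hk2 : k ≤ n := by omega
    rcases le_or_gt u n with hun | hun
    · rcases lt_trichotomy u k with hc | hc | hc
      · -- region B
        obtain ⟨-, k2, -, -⟩ := key u k hu hc hk2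
        rw [hcoord u (n+k) hu (by omega) (by omega), yy_B _ hu hc hk2]
        by_cases pu : π u < π (n+u) <;> by_cases pk : π k < π (n+k)
        · rw [if_pos (k2.mpr ⟨pu, pk⟩)]; simp [pu, pk]
        · rw [if_neg (fun h => by have := k2.mp h; tauto)]; simp [pu, pk]
        · rw [if_neg (fun h => by have := k2.mp h; tauto)]; simp [pu, pk]
        · rw [if_neg (fun h => by have := k2.mp h; tauto)]; simp [pu, pk]
      · -- region E
        subst hc
        rw [hcoord u (n+u) hu (by omega) (by omega), yy_E _ hu hun]
        by_cases pu : π u < π (n+u) <;> simp [pu]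
      · -- region C
        obtain ⟨-, -, k3, -⟩ := key k u hk1 hc hun
        rw [hcoord u (n+k) hu (by omega) (by omega), yy_C _ hk1 hc hun]
        rw [if_neg (lt_asymm k3)]
    · -- region D
      obtain ⟨i, rfl⟩ : ∃ i, u = n + i := ⟨u - n, by omega⟩
      have hi1 : 1 ≤ i := by omega
      have hik : i < k := by omega
      obtain ⟨-, -, -, k4⟩ := key i k hi1 hik hk2
      rw [hcoord (n+i) (n+k) (by omega) (by omega) (by omega), yy_D _ hi1 hik hk2]
      by_cases pi' : π i < π (n+i) <;> by_cases pk : π k < π (n+k)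
      · rw [if_pos (k4.mpr (Or.inr pk))]; simp [pi', pk]
      · rw [if_neg (fun h => by rcases k4.mp h with h' | h' <;> tauto)]; simp [pi', pk]
      · rw [if_pos (k4.mpr (Or.inl pi'))]; simp [pi', pk]
      · rw [if_pos (k4.mpr (Or.inl pi'))]; simp [pi', pk]

end BQPLOP


open BQPLOP

/-- for every `n` there is an injective affine map `A` sending the
boolean quadric polytope `conv (BQP n)` onto an exposed face of the linear
ordering polytope `conv (LOP (2n))`. -/
theorem bqp_affinely_equivalent_to_face_of_lop (n : ℕ) :
    ∃ A : (ℕ → ℕ → ℝ) →ᵃ[ℝ] (ℕ → ℕ → ℝ), Function.Injective A ∧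
      IsExposed ℝ (convexHull ℝ (LOP (2 * n))) (A '' (convexHull ℝ (BQP n))) := by
  refine ⟨Amap n, Amap_injective n, ?_⟩
  intro _
  refine ⟨lfunc n, ?_⟩
  have himg : (Amap n) '' (convexHull ℝ (BQP n)) = convexHull ℝ (Yset n) := by
    rw [AffineMap.image_convexHull]
    congr 1
    ext y
    constructor
    · rintro ⟨x, hx, rfl⟩
      obtain ⟨σ, rfl⟩ := BQP_sub n hx
      exact ⟨σ, Amap_xx n σ⟩
    · rintro ⟨σ, rfl⟩
      exact ⟨xx n σ, xx_mem_BQP n σ, Amap_xx n σ⟩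
  set M : ℝ := lfunc n (yy n (fun _ => true)) with hM
  have hYsub : Yset n ⊆ LOP (2*n) := by
    rintro y ⟨σ, rfl⟩; exact yy_mem_LOP n σ
  have hYM : ∀ y ∈ Yset n, lfunc n y = M := by
    rintro y ⟨σ, rfl⟩
    rw [hM, lfunc_apply, lfunc_apply]
    exact Finset.sum_congr rfl fun p hp => by rw [term_yy n σ hp, term_yy n _ hp]
  have hle : ∀ y ∈ LOP (2*n), lfunc n y ≤ M := by
    intro y hy
    rw [hM, lfunc_apply, lfunc_apply]
    refine Finset.sum_le_sum fun p hp => ?_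
    rw [term_yy n _ hp]
    exact term_le n hy hp
  have hlinear : IsLinearMap ℝ (fun w => lfunc n w) :=
    ⟨fun a b => map_add _ a b, fun c a => map_smul _ c a⟩
  have hhull_le : ∀ y ∈ convexHull ℝ (LOP (2*n)), lfunc n y ≤ M := by
    intro y hy
    exact convexHull_min hle (convex_halfSpace_le hlinear M) hy
  have hhull_eq : ∀ y ∈ convexHull ℝ (Yset n), lfunc n y = M := by
    intro y hy
    exact convexHull_min hYM (convex_hyperplane hlinear M) hy
  rw [himg]
  ext z
  constructor
  · intro hz
    refine ⟨convexHull_mono hYsub hz, ?_⟩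
    intro y hy
    rw [hhull_eq z hz]
    exact hhull_le y hy
  · rintro ⟨hzhull, hzmax⟩
    have hzM : lfunc n z = M := by
      have h1 : lfunc n z ≤ M := hhull_le z hzhull
      have h2 : M ≤ lfunc n z := by
        have hyT : yy n (fun _ => true) ∈ convexHull ℝ (LOP (2*n)) :=
          subset_convexHull ℝ _ (yy_mem_LOP n _)
        exact hzmax _ hyT
      linarith
    rw [convexHull_eq] at hzhull
    obtain ⟨ι, t, w, f, hw0, hw1, hmem, hcm⟩ := hzhull
    have hfle : ∀ i ∈ t, lfunc n (f i) ≤ M := fun i hi => hle _ (hmem i hi)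
    have hsum : ∑ i ∈ t, w i * lfunc n (f i) = M := by
      rw [← hzM, ← hcm, Finset.centerMass_eq_of_sum_1 _ _ hw1, map_sum]
      exact Finset.sum_congr rfl fun i _ => by rw [map_smul, smul_eq_mul]
    have hzero : ∀ i ∈ t, w i * (M - lfunc n (f i)) = 0 := by
      have hs0 : ∑ i ∈ t, w i * (M - lfunc n (f i)) = 0 := by
        have e1 : ∀ i ∈ t, w i * (M - lfunc n (f i))
            = w i * M - w i * lfunc n (f i) := fun i _ => by ring
        rw [Finset.sum_congr rfl e1, Finset.sum_sub_distrib, ← Finset.sum_mul, hw1,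
          one_mul, hsum]
        ring
      exact (Finset.sum_eq_zero_iff_of_nonneg fun i hi =>
        mul_nonneg (hw0 i hi) (by have := hfle i hi; linarith)).mp hs0
    rw [← hcm, ← Finset.centerMass_filter_ne_zero]
    refine Finset.centerMass_mem_convexHull _ ?_ ?_ ?_
    · intro i hi
      exact hw0 i (Finset.mem_of_mem_filter i hi)
    · rw [Finset.sum_filter_ne_zero, hw1]
      norm_num
    · intro i hi
      have hiT := Finset.mem_of_mem_filter i hi
      have hwi : w i ≠ 0 := (Finset.mem_filter.mp hi).2
      have hfiM : lfunc n (f i) = M := by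
        rcases mul_eq_zero.mp (hzero i hiT) with h | h
        · exact absurd h hwi
        · linarith
      exact eq_yy_of_max n (hmem i hiT) (max_terms n (hmem i hiT) hfiM)
end

section
/- Let G be a finite simple graph on vertex set {1,…,n}. For every y ∈ F(G) and every edge {i,j} of G with i < j, one has y_{i,n+i} ≤ y_{i,j} ≤ 1 − y_{j,n+j}, and consequently y_{i,n+i} + y_{j,n+j} ≤ 1. -/
/-- `Stable n G`: the vertex set of the stable set polytope of `G` on `{1,…,n}`:
0/1 vectors `x` with `x i + x j ≤ 1` for every edge `{i,j}` of `G`;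
coordinates outside `{1,…,n}` are normalized to `0`. -/
def Stable (n : ℕ) (G : SimpleGraph ℕ) : Set (ℕ → ℝ) :=
  {x | (∀ i, ¬(1 ≤ i ∧ i ≤ n) → x i = 0) ∧
    (∀ i, 1 ≤ i → i ≤ n → x i = 0 ∨ x i = 1) ∧
    ∀ i j, G.Adj i j → x i + x j ≤ 1}

/-- The face `F(G) ⊆ LOP (2n)`: all `y ∈ LOP (2n)` with `y i (n+j) = 0` and
`y j (n+i) = 0` for every edge `{i,j}` of `G` with `i < j`. -/
def FaceFG (n : ℕ) (G : SimpleGraph ℕ) : Set (ℕ → ℕ → ℝ) :=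
  {y | y ∈ LOP (2 * n) ∧
    ∀ i j, G.Adj i j → i < j → y i (n + j) = 0 ∧ y j (n + i) = 0}

/-- for `y ∈ F(G)` and every edge `{i,j}` of `G` with `i < j`,
`y i (n+i) ≤ y i j ≤ 1 - y j (n+j)`, and consequently
`y i (n+i) + y j (n+j) ≤ 1`. -/
theorem faceFG_edge_inequalities (n : ℕ) (G : SimpleGraph ℕ)
    (hG : ∀ i j, G.Adj i j → 1 ≤ i ∧ i ≤ n ∧ 1 ≤ j ∧ j ≤ n)
    (y : ℕ → ℕ → ℝ) (hy : y ∈ FaceFG n G) :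
    ∀ i j, G.Adj i j → i < j →
      y i (n + i) ≤ y i j ∧ y i j ≤ 1 - y j (n + j) ∧
      y i (n + i) + y j (n + j) ≤ 1 := by
  obtain ⟨⟨hzero, π, hbij, hval⟩, hF⟩ := hy
  intro i j hadj hij
  obtain ⟨hi1, hin, hj1, hjn⟩ := hG i j hadj
  obtain ⟨h1, h2⟩ := hF i j hadj hij
  have e1 : y i (n + j) = if π i < π (n + j) then (1:ℝ) else 0 :=
    hval i (n + j) hi1 (by omega) (by omega)
  have e2 : y j (n + i) = if π j < π (n + i) then (1:ℝ) else 0 :=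
    hval j (n + i) hj1 (by omega) (by omega)
  have e3 : y i (n + i) = if π i < π (n + i) then (1:ℝ) else 0 :=
    hval i (n + i) hi1 (by omega) (by omega)
  have e4 : y i j = if π i < π j then (1:ℝ) else 0 :=
    hval i j hi1 hij (by omega)
  have e5 : y j (n + j) = if π j < π (n + j) then (1:ℝ) else 0 :=
    hval j (n + j) hj1 (by omega) (by omega)
  have hne1 : π i ≠ π (n + j) := fun h => by
    have := hbij.injOn (by simp; omega) (by simp; omega) h; omega
  have hne2 : π j ≠ π (n + i) := fun h => by
    have := hbij.injOn (by simp; omega) (by simp; omega) h; omega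
  have hd : π (n + j) < π i := by
    rw [e1] at h1; by_contra hc
    simp only [if_pos (lt_of_le_of_ne (not_lt.mp hc) hne1)] at h1
    exact one_ne_zero h1
  have hc : π (n + i) < π j := by
    rw [e2] at h2; by_contra hc
    simp only [if_pos (lt_of_le_of_ne (not_lt.mp hc) hne2)] at h2
    exact one_ne_zero h2
  rw [e3, e4, e5]
  split_ifs <;> norm_num <;> omega
end

section
/- Let G be a finite simple graph on vertex set {1,…,n}. For every y ∈ F(G), the vector x ∈ {0,1}^n defined by x_i = y_{i,n+i} for i ∈ {1,…,n} belongs to Stable(G). -/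
/-- for every `y ∈ F(G)`, the vector `x` with `x i = y i (n+i)` for
`i ∈ {1,…,n}` (and `0` outside) belongs to `Stable(G)`. -/
theorem faceFG_projection_mem_stable (n : ℕ) (G : SimpleGraph ℕ)
    (hG : ∀ i j, G.Adj i j → 1 ≤ i ∧ i ≤ n ∧ 1 ≤ j ∧ j ≤ n)
    (y : ℕ → ℕ → ℝ) (hy : y ∈ FaceFG n G) :
    (fun i => if 1 ≤ i ∧ i ≤ n then y i (n + i) else 0) ∈ Stable n G := by
  obtain ⟨⟨h0, π, hbij, hval⟩, hface⟩ := hy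
  have hdiag : ∀ i, 1 ≤ i → i ≤ n → y i (n + i) = if π i < π (n + i) then (1:ℝ) else 0 := by
    intro i h1 h2
    exact hval i (n + i) h1 (by omega) (by omega)
  refine ⟨?_, ?_, ?_⟩
  · intro i hi; simp [hi]
  · intro i h1 h2
    simp only [h1, h2, and_self, if_true]
    rw [hdiag i h1 h2]
    split <;> simp
  · intro i j hadj
    obtain ⟨hi1, hi2, hj1, hj2⟩ := hG i j hadj
    have hne : i ≠ j := hadj.ne
    -- key lemma for ordered pair
    have key : ∀ a b, G.Adj a b → a < b → 1 ≤ a → b ≤ n →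
        y a (n + a) + y b (n + b) ≤ 1 := by
      intro a b hab hlt ha1 hb2
      obtain ⟨hz1, hz2⟩ := hface a b hab hlt
      have e1 := hval a (n + b) ha1 (by omega) (by omega)
      have e2 := hval b (n + a) (by omega) (by omega) (by omega)
      rw [hz1] at e1; rw [hz2] at e2
      have p1 : ¬ π a < π (n + b) := by
        intro h; rw [if_pos h] at e1; norm_num at e1
      have p2 : ¬ π b < π (n + a) := by
        intro h; rw [if_pos h] at e2; norm_num at e2
      rw [hdiag a ha1 (by omega), hdiag b (by omega) hb2]
      split
      · split
        · omega
        · norm_num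
      · split <;> norm_num
    simp only [hi1, hi2, hj1, hj2, and_self, if_true]
    rcases lt_or_gt_of_ne hne with h | h
    · exact key i j hadj h hi1 hj2
    · have := key j i hadj.symm h hj1 hi2
      linarith
end

section
/- Let G be a finite simple graph on vertex set {1,…,n}. For every x ∈ Stable(G) there exists y ∈ F(G) such that y_{i,n+i} = x_i for all i ∈ {1,…,n}. -/
/-- every `x ∈ Stable(G)` is the projection of some `y ∈ F(G)`,
i.e. there is `y ∈ F(G)` with `y i (n+i) = x i` for all `i ∈ {1,…,n}`. -/
theorem stable_lifts_to_faceFG (n : ℕ) (G : SimpleGraph ℕ)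
    (hG : ∀ i j, G.Adj i j → 1 ≤ i ∧ i ≤ n ∧ 1 ≤ j ∧ j ≤ n)
    (x : ℕ → ℝ) (hx : x ∈ Stable n G) :
    ∃ y ∈ FaceFG n G, ∀ i, 1 ≤ i → i ≤ n → y i (n + i) = x i := by
  classical
  obtain ⟨hx0, hx01, hxe⟩ := hx
  -- key function
  set κ : ℕ → ℕ := fun k =>
    if k ≤ n then (if x k = 1 then n + k else 3 * n + k)
    else (if x (k - n) = 1 then 2 * n + (k - n) else k - n) with hκdef
  set T : Finset ℕ := Finset.Icc 1 (2 * n) with hT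
  have hκinj : Set.InjOn κ ↑T := by
    intro k hk l hl h
    simp only [hT, Finset.coe_Icc, Set.mem_Icc] at hk hl
    simp only [hκdef] at h
    split_ifs at h <;> omega
  set A : Finset ℕ := T.image κ with hA
  have hcard : T.card = A.card := (Finset.card_image_of_injOn hκinj).symm
  set e : Fin A.card ≃o A := A.orderIsoOfFin rfl with he
  set f : Fin A.card ≃o T := T.orderIsoOfFin hcard with hf
  set g : A ≃o T := e.symm.trans f with hg
  set π : ℕ → ℕ := fun k =>
    if h : k ∈ T then (g ⟨κ k, Finset.mem_image_of_mem κ h⟩ : ℕ) else 0 with hπdef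
  have hπval : ∀ k (h : k ∈ T), π k = (g ⟨κ k, Finset.mem_image_of_mem κ h⟩ : ℕ) := by
    intro k h; simp [hπdef, h]
  have hmono : ∀ k ∈ T, ∀ l ∈ T, (π k < π l ↔ κ k < κ l) := by
    intro k hk l hl
    rw [hπval k hk, hπval l hl, Subtype.coe_lt_coe, g.lt_iff_lt, Subtype.mk_lt_mk]
  have hmem : ∀ k ∈ T, π k ∈ T := by
    intro k hk; rw [hπval k hk]; exact (g ⟨κ k, Finset.mem_image_of_mem κ hk⟩).2
  have hsurj : ∀ m ∈ T, ∃ k ∈ T, π k = m := by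
    intro m hm
    obtain ⟨a, ha⟩ := g.surjective ⟨m, hm⟩
    obtain ⟨k, hk, hκk⟩ := Finset.mem_image.1 a.2
    refine ⟨k, hk, ?_⟩
    rw [hπval k hk]
    have : (⟨κ k, Finset.mem_image_of_mem κ hk⟩ : A) = a := Subtype.ext hκk
    rw [this, ha]
  have hbij : Set.BijOn π (Set.Icc 1 (2 * n)) (Set.Icc 1 (2 * n)) := by
    have hco : (Set.Icc 1 (2 * n) : Set ℕ) = ↑T := by simp [hT]
    rw [hco]
    refine ⟨fun k hk => hmem k hk, ?_, ?_⟩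
    · intro k hk l hl h
      apply hκinj hk hl
      have := (hmono k hk l hl)
      have := (hmono l hl k hk)
      omega
    · intro m hm
      obtain ⟨k, hk, hkm⟩ := hsurj m hm
      exact ⟨k, hk, hkm⟩
  -- κ computations
  have hκ1 : ∀ i, 1 ≤ i → i ≤ n → κ i = if x i = 1 then n + i else 3 * n + i := by
    intro i h1 h2; simp [hκdef, h2]
  have hκ2 : ∀ i, 1 ≤ i → i ≤ n → κ (n + i) = if x i = 1 then 2 * n + i else i := by
    intro i h1 h2
    have h3 : ¬ (n + i ≤ n) := by omega
    simp [hκdef, h3]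
  -- not both endpoints of an edge are 1
  have hnb : ∀ i j, G.Adj i j → x i = 1 → x j = 1 → False := by
    intro i j hadj h1 h2
    have := hxe i j hadj
    rw [h1, h2] at this; norm_num at this
  have hedge : ∀ i j, G.Adj i j → κ (n + j) < κ i := by
    intro i j hadj
    obtain ⟨hi1, hi2, hj1, hj2⟩ := hG i j hadj
    rw [hκ1 i hi1 hi2, hκ2 j hj1 hj2]
    by_cases h : x i = 1
    · have hj : ¬ x j = 1 := fun hj => hnb i j hadj h hj
      simp [h, hj]; omega
    · simp [h]
      split_ifs <;> omega
  -- the lifted vector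
  set y : ℕ → ℕ → ℝ := fun i j =>
    if 1 ≤ i ∧ i < j ∧ j ≤ 2 * n then (if π i < π j then (1 : ℝ) else 0) else 0 with hy
  have hyin : ∀ i j, 1 ≤ i → i < j → j ≤ 2 * n →
      y i j = if π i < π j then (1 : ℝ) else 0 := by
    intro i j h1 h2 h3; simp [hy, h1, h2, h3]
  have hTmem : ∀ k, 1 ≤ k → k ≤ 2 * n → k ∈ T := by
    intro k h1 h2; simp [hT, h1, h2]
  refine ⟨y, ⟨⟨fun i j h => by simp only [hy]; rw [if_neg h], π, hbij, hyin⟩, ?_⟩, ?_⟩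
  · -- edge conditions
    intro i j hadj hij
    obtain ⟨hi1, hi2, hj1, hj2⟩ := hG i j hadj
    constructor
    · rw [hyin i (n + j) hi1 (by omega) (by omega)]
      rw [if_neg]
      rw [hmono i (hTmem i hi1 (by omega)) (n + j) (hTmem (n + j) (by omega) (by omega))]
      have := hedge i j hadj
      omega
    · rw [hyin j (n + i) hj1 (by omega) (by omega)]
      rw [if_neg]
      rw [hmono j (hTmem j hj1 (by omega)) (n + i) (hTmem (n + i) (by omega) (by omega))]
      have := hedge j i hadj.symm
      omega
  · -- diagonal
    intro i h1 h2
    rw [hyin i (n + i) h1 (by omega) (by omega)]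
    have hiff := hmono i (hTmem i h1 (by omega)) (n + i) (hTmem (n + i) (by omega) (by omega))
    rw [hκ1 i h1 h2, hκ2 i h1 h2] at hiff
    rcases hx01 i h1 h2 with h | h
    · have hne : ¬ x i = 1 := by rw [h]; norm_num
      rw [if_neg hne, if_neg hne] at hiff
      rw [if_neg (fun hc => absurd (hiff.mp hc) (by omega)), h]
    · rw [if_pos h, if_pos h] at hiff
      rw [if_pos (hiff.mpr (by omega)), h]
end

section
/- (Lemma 1) Let G be a finite simple graph on vertex set {1,…,n}, and let α : ℝ^{2n(2n−1)/2} → ℝ^n be the linear projection sending a vector y to (y_{1,n+1}, y_{2,n+2}, …, y_{n,2n}). Then α(F(G)) = Stable(G); hence the stable set polytope conv(Stable(G)) is the image under the affine map α of the face conv(F(G)) of the linear ordering polytope conv(LOP(2n)). -/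
/-- The linear projection `α` sending `y` to `(y 1 (n+1), …, y n (2n))`
(coordinates outside `{1,…,n}` are `0`). -/
def alphaProj (n : ℕ) (y : ℕ → ℕ → ℝ) : ℕ → ℝ := fun i =>
  if 1 ≤ i ∧ i ≤ n then y i (n + i) else 0

/-!
A vertex `y` of `F(G)` is a linear order on `{1, …, 2n}` in which, for every edge `ij`, the copy
`n + j` precedes `i`; its projection `α y` marks the `i` that precede their own copy `n + i`. Two
adjacent marked vertices would give `n + j ≤ i < n + i ≤ j < n + j`, so `α y` is stable.
Conversely a stable set `S` is realised by the order
`{n + j | j ∉ S} < S < {n + i | i ∈ S} < {i | i ∉ S}`.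
The convex-hull statement follows because `α` is linear, and `conv F(G)` is exposed because
`F(G)` is the zero set on `LOP (2n)` of the nonnegative functional `∑ y i (n + j)` over adjacent
`i, j`.
-/

open scoped Finset

section ExposedFace

variable {E : Type*} [AddCommGroup E] [Module ℝ E]

theorem sep_convexHull_subset_convexHull_sep (l : E →ₗ[ℝ] ℝ) {S : Set E} {c : ℝ}
    (hS : ∀ x ∈ S, c ≤ l x) (hne : {x ∈ S | l x = c}.Nonempty) :
    {x ∈ convexHull ℝ S | l x = c} ⊆ convexHull ℝ {x ∈ S | l x = c} := by
  classical
  rintro x ⟨hx, hlx⟩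
  obtain ⟨ι, _, w, z, hw₀, hw₁, hz, rfl⟩ := mem_convexHull_iff_exists_fintype.1 hx
  obtain ⟨f, hf⟩ := hne
  -- `c = l x` is a convex combination of the values `l (z i) ≥ c`, so no weight sits above `c`.
  have hgap : ∀ i, w i * (l (z i) - c) = 0 := by
    have hsum : ∑ i, w i * (l (z i) - c) = 0 := by
      simp only [mul_sub, Finset.sum_sub_distrib, ← Finset.sum_mul, hw₁, one_mul, ← hlx,
        map_sum, map_smul, smul_eq_mul, sub_self]
    intro i
    exact (Finset.sum_eq_zero_iff_of_nonneg fun i _ =>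
      mul_nonneg (hw₀ i) (sub_nonneg.2 (hS _ (hz i)))).1 hsum i (Finset.mem_univ i)
  refine mem_convexHull_of_exists_fintype w (fun i => if w i = 0 then f else z i) hw₀ hw₁
    (fun i => ?_) (Finset.sum_congr rfl fun i _ => ?_)
  · split_ifs with hwi
    · exact hf
    · exact ⟨hz i, sub_eq_zero.1 ((mul_eq_zero.1 (hgap i)).resolve_left hwi)⟩
  · split_ifs with hwi <;> simp [hwi]

variable [TopologicalSpace E]

theorem isExposed_convexHull_of_le (l : StrongDual ℝ E) {S : Set E} {c : ℝ}
    (hS : ∀ x ∈ S, c ≤ l x) :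
    IsExposed ℝ (convexHull ℝ S) (convexHull ℝ {x ∈ S | l x = c}) := by
  intro hne
  obtain ⟨f, hfS, hfc⟩ := convexHull_nonempty_iff.1 hne
  have hge : ∀ y ∈ convexHull ℝ S, c ≤ l y :=
    convexHull_min hS (convex_halfSpace_ge l.toLinearMap.isLinear c)
  have heq : ∀ y ∈ convexHull ℝ {x ∈ S | l x = c}, l y = c :=
    convexHull_min (fun x hx => hx.2) (convex_hyperplane l.toLinearMap.isLinear c)
  refine ⟨-l, Set.Subset.antisymm (fun x hx => ⟨convexHull_mono (Set.sep_subset _ _) hx,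
    fun y hy => by simpa [heq x hx] using hge y hy⟩) ?_⟩
  rintro x ⟨hx, hmin⟩
  have hlx : l x = c := le_antisymm (by simpa [hfc] using hmin f (subset_convexHull ℝ S hfS))
    (hge x hx)
  exact sep_convexHull_subset_convexHull_sep l.toLinearMap hS ⟨f, hfS, hfc⟩ ⟨hx, hlx⟩

end ExposedFace

section Ranking

variable {α : Type*} [LinearOrder α]

theorem exists_bijOn_Icc_lt_iff_lt (m : ℕ) {f : ℕ → α} (hf : Set.InjOn f (Set.Icc 1 m)) :
    ∃ π : ℕ → ℕ, Set.BijOn π (Set.Icc 1 m) (Set.Icc 1 m) ∧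
      ∀ i ∈ Set.Icc 1 m, ∀ j ∈ Set.Icc 1 m, π i < π j ↔ f i < f j := by
  set π : ℕ → ℕ := fun i => #{k ∈ Finset.Icc 1 m | f k ≤ f i}
  have hmem : ∀ {i}, i ∈ Set.Icc 1 m → i ∈ {k ∈ Finset.Icc 1 m | f k ≤ f i} := fun hi =>
    Finset.mem_filter.2 ⟨Finset.mem_Icc.2 hi, le_rfl⟩
  have hlt : ∀ i j, j ∈ Set.Icc 1 m → (π i < π j ↔ f i < f j) := by
    intro i j hj
    constructor
    · intro h
      by_contra! hji
      refine h.not_ge (Finset.card_le_card fun k hk => ?_)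
      simp only [Finset.mem_filter] at hk ⊢
      exact ⟨hk.1, hk.2.trans hji⟩
    · intro h
      refine Finset.card_lt_card ⟨fun k hk => ?_, fun hsub => ?_⟩
      · simp only [Finset.mem_filter] at hk ⊢
        exact ⟨hk.1, hk.2.trans h.le⟩
      · exact h.not_ge (Finset.mem_filter.1 (hsub (hmem hj))).2
  have hmaps : Set.MapsTo π (Set.Icc 1 m) (Set.Icc 1 m) := fun i hi =>
    ⟨Finset.card_pos.2 ⟨i, hmem hi⟩,
      (Finset.card_filter_le _ _).trans (by simp)⟩
  have hinj : Set.InjOn π (Set.Icc 1 m) := by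
    intro i hi j hj hij
    rcases lt_trichotomy (f i) (f j) with h | h | h
    · exact absurd ((hlt i j hj).2 h) hij.not_lt
    · exact hf hi hj h
    · exact absurd ((hlt j i hi).2 h) hij.not_gt
  exact ⟨π, ((Set.finite_Icc 1 m).injOn_iff_bijOn_of_mapsTo hmaps).1 hinj,
    fun i _ j hj => hlt i j hj⟩

def lopOfKey (m : ℕ) (f : ℕ → α) : ℕ → ℕ → ℝ := fun i j =>
  if 1 ≤ i ∧ i < j ∧ j ≤ m ∧ f i < f j then 1 else 0

theorem lopOfKey_mem_LOP (m : ℕ) {f : ℕ → α} (hf : Set.InjOn f (Set.Icc 1 m)) :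
    lopOfKey m f ∈ LOP m := by
  obtain ⟨π, hπ, hlt⟩ := exists_bijOn_Icc_lt_iff_lt m hf
  refine ⟨fun i j hij => if_neg fun h => hij ⟨h.1, h.2.1, h.2.2.1⟩, π, hπ,
    fun i j hi hij hj => ?_⟩
  simp only [lopOfKey, hlt i ⟨hi, by omega⟩ j ⟨by omega, hj⟩, hi, hij, hj, true_and]

end Ranking

theorem LOP_nonneg {m : ℕ} {y : ℕ → ℕ → ℝ} (hy : y ∈ LOP m) (a b : ℕ) : 0 ≤ y a b := by
  obtain ⟨h0, π, -, hπ⟩ := hy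
  by_cases h : 1 ≤ a ∧ a < b ∧ b ≤ m
  · rw [hπ a b h.1 h.2.1 h.2.2]
    split_ifs <;> norm_num
  · rw [h0 a b h]

theorem mem_FaceFG_iff {n : ℕ} {G : SimpleGraph ℕ} {y : ℕ → ℕ → ℝ} :
    y ∈ FaceFG n G ↔ y ∈ LOP (2 * n) ∧ ∀ i j, G.Adj i j → y i (n + j) = 0 :=
  ⟨fun h => ⟨h.1, fun i j hij => (lt_or_gt_of_ne hij.ne).elim (fun hlt => (h.2 i j hij hlt).1)
    fun hgt => (h.2 j i hij.symm hgt).2⟩,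
   fun h => ⟨h.1, fun i j hij _ => ⟨h.2 i j hij, h.2 j i hij.symm⟩⟩⟩

open Classical in
noncomputable def edgeSum (n : ℕ) (G : SimpleGraph ℕ) : StrongDual ℝ (ℕ → ℕ → ℝ) :=
  ∑ p ∈ (Finset.Icc 1 n ×ˢ Finset.Icc 1 n).filter (fun p => G.Adj p.1 p.2),
    (ContinuousLinearMap.proj (R := ℝ) (φ := fun _ : ℕ => ℝ) (n + p.2)).comp
      (ContinuousLinearMap.proj (R := ℝ) (φ := fun _ : ℕ => ℕ → ℝ) p.1)

theorem edgeSum_nonneg_of_mem_LOP (n : ℕ) (G : SimpleGraph ℕ) {y : ℕ → ℕ → ℝ}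
    (hy : y ∈ LOP (2 * n)) : 0 ≤ edgeSum n G y := by
  simp only [edgeSum, _root_.sum_apply, ContinuousLinearMap.comp_apply,
    ContinuousLinearMap.proj_apply]
  exact Finset.sum_nonneg fun p _ => LOP_nonneg hy _ _

theorem FaceFG_eq_sep_edgeSum {n : ℕ} {G : SimpleGraph ℕ}
    (hG : ∀ i j, G.Adj i j → 1 ≤ i ∧ i ≤ n ∧ 1 ≤ j ∧ j ≤ n) :
    FaceFG n G = {y ∈ LOP (2 * n) | edgeSum n G y = 0} := by
  ext y
  rw [mem_FaceFG_iff, Set.mem_ofPred_eq, and_congr_right_iff]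
  intro hy
  simp only [edgeSum, _root_.sum_apply, ContinuousLinearMap.comp_apply,
    ContinuousLinearMap.proj_apply]
  rw [Finset.sum_eq_zero_iff_of_nonneg fun p _ => LOP_nonneg hy _ _]
  simp only [Finset.mem_filter, Finset.mem_product, Finset.mem_Icc, and_imp, Prod.forall]
  exact ⟨fun h i j _ _ _ _ hij => h i j hij, fun h i j hij =>
    let ⟨h1, h2, h3, h4⟩ := hG i j hij; h i j h1 h2 h3 h4 hij⟩

theorem isLinearMap_alphaProj (n : ℕ) : IsLinearMap ℝ (alphaProj n) where
  map_add y z := by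
    ext i
    simp only [alphaProj, Pi.add_apply]
    split_ifs <;> simp
  map_smul c y := by
    ext i
    simp only [alphaProj, Pi.smul_apply, smul_eq_mul]
    split_ifs <;> simp

theorem alphaProj_mem_Stable {n : ℕ} {G : SimpleGraph ℕ}
    (hG : ∀ i j, G.Adj i j → 1 ≤ i ∧ i ≤ n ∧ 1 ≤ j ∧ j ≤ n)
    {y : ℕ → ℕ → ℝ} (hy : y ∈ FaceFG n G) : alphaProj n y ∈ Stable n G := by
  obtain ⟨⟨-, π, -, hπ⟩, hface⟩ := mem_FaceFG_iff.1 hy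
  have hdiag : ∀ i, 1 ≤ i → i ≤ n →
      alphaProj n y i = if π i < π (n + i) then 1 else 0 := fun i h1 h2 => by
    rw [alphaProj, if_pos ⟨h1, h2⟩, hπ i (n + i) h1 (by omega) (by omega)]
  have hcross : ∀ i j, G.Adj i j → π (n + j) ≤ π i := by
    intro i j hij
    obtain ⟨h1, h2, h3, h4⟩ := hG i j hij
    have h := hface i j hij
    rw [hπ i (n + j) h1 (by omega) (by omega)] at h
    by_contra! hlt
    simp [hlt] at h
  refine ⟨fun i hi => by rw [alphaProj, if_neg hi], fun i h1 h2 => ?_, fun i j hij => ?_⟩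
  · rw [hdiag i h1 h2]
    split_ifs <;> simp
  · obtain ⟨h1, h2, h3, h4⟩ := hG i j hij
    rw [hdiag i h1 h2, hdiag j h3 h4]
    have := hcross i j hij
    have := hcross j i hij.symm
    split_ifs <;> first | omega | norm_num

/-- Blocks `0 < 1 < 2 < 3` are `{n + j | j ∉ S}`, `S`, `{n + i | i ∈ S}`, `{i | i ∉ S}` for
`S = {i | x i = 1}`; ties are broken by index. -/
noncomputable def stableKey (n : ℕ) (x : ℕ → ℝ) (v : ℕ) : ℕ ×ₗ ℕ :=
  toLex (if v ≤ n then (if x v = 1 then 1 else 3) else (if x (v - n) = 1 then 2 else 0), v)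

theorem stableKey_lt_iff {n : ℕ} {x : ℕ → ℝ} {i j : ℕ} (hin : i ≤ n) (hj : 1 ≤ j) :
    stableKey n x i < stableKey n x (n + j) ↔ x i = 1 ∧ x j = 1 := by
  simp only [stableKey, Prod.Lex.toLex_lt_toLex, hin, if_true, show ¬ n + j ≤ n by omega,
    if_false, Nat.add_sub_cancel_left]
  split_ifs <;> simp_all

theorem exists_mem_FaceFG_alphaProj_eq {n : ℕ} {G : SimpleGraph ℕ}
    (hG : ∀ i j, G.Adj i j → 1 ≤ i ∧ i ≤ n ∧ 1 ≤ j ∧ j ≤ n)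
    {x : ℕ → ℝ} (hx : x ∈ Stable n G) : ∃ y ∈ FaceFG n G, alphaProj n y = x := by
  obtain ⟨hx0, hx01, hxE⟩ := hx
  have hinj : Set.InjOn (stableKey n x) (Set.Icc 1 (2 * n)) := fun a _ b _ h =>
    congrArg (fun p => (ofLex p).2) h
  refine ⟨lopOfKey (2 * n) (stableKey n x),
    mem_FaceFG_iff.2 ⟨lopOfKey_mem_LOP (2 * n) hinj, fun i j hij => ?_⟩, funext fun i => ?_⟩
  · obtain ⟨h1, h2, h3, h4⟩ := hG i j hij
    have hstable := hxE i j hij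
    refine if_neg fun ⟨_, _, _, hlt⟩ => ?_
    obtain ⟨hxi, hxj⟩ := (stableKey_lt_iff h2 h3).1 hlt
    rw [hxi, hxj] at hstable
    norm_num at hstable
  · by_cases hi : 1 ≤ i ∧ i ≤ n
    · have hrange : i < n + i ∧ n + i ≤ 2 * n := by omega
      rw [alphaProj, if_pos hi, lopOfKey]
      simp only [stableKey_lt_iff hi.2 hi.1, and_self, hi.1, hrange, true_and]
      rcases hx01 i hi.1 hi.2 with h | h <;> simp [h]
    · rw [alphaProj, if_neg hi, hx0 i hi]

/-- Lemma 1: `α(F(G)) = Stable(G)`; hence the stable set polytope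
`conv (Stable G)` is the image under the affine map `α` of the face
`conv (F(G))` of the linear ordering polytope `conv (LOP (2n))`. -/
theorem alphaProj_image_faceFG (n : ℕ) (G : SimpleGraph ℕ)
    (hG : ∀ i j, G.Adj i j → 1 ≤ i ∧ i ≤ n ∧ 1 ≤ j ∧ j ≤ n) :
    alphaProj n '' FaceFG n G = Stable n G ∧
    alphaProj n '' (convexHull ℝ (FaceFG n G)) = convexHull ℝ (Stable n G) ∧
    IsExposed ℝ (convexHull ℝ (LOP (2 * n))) (convexHull ℝ (FaceFG n G)) := by
  have himage : alphaProj n '' FaceFG n G = Stable n G :=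
    Set.Subset.antisymm (Set.image_subset_iff.2 fun _ hy => alphaProj_mem_Stable hG hy)
      fun _ hx => exists_mem_FaceFG_alphaProj_eq hG hx
  refine ⟨himage, by rw [(isLinearMap_alphaProj n).image_convexHull, himage], ?_⟩
  rw [FaceFG_eq_sep_edgeSum hG]
  exact isExposed_convexHull_of_le (edgeSum n G) fun y hy => edgeSum_nonneg_of_mem_LOP n G hy
end

section
/- For every n ∈ ℕ, if y, y′ ∈ F satisfy y_{2i-1,2i} = y′_{2i-1,2i} for all i ∈ {1,…,n}, then y = y′; that is, an element of F is uniquely determined by its n coordinates y_{2i-1,2i}. -/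
lemma faceF_coords (n a b : ℕ) (y : ℕ → ℕ → ℝ) (hy : y ∈ FaceF n)
    (ha : 1 ≤ a) (hab : a < b) (hb : b ≤ n) :
    y (2*a) (2*b-1) = 0 ∧
    y (2*a-1) (2*b-1) = y (2*a-1) (2*a) * (1 - y (2*b-1) (2*b)) ∧
    y (2*a-1) (2*b) = y (2*a-1) (2*a) + y (2*b-1) (2*b)
      - y (2*a-1) (2*a) * y (2*b-1) (2*b) ∧
    y (2*a) (2*b) = (1 - y (2*a-1) (2*a)) * y (2*b-1) (2*b) := by
  obtain ⟨⟨hz, π, hbij, hval⟩, hface⟩ := hy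
  obtain ⟨e1, e2, e3⟩ := hface a b ha hab hb
  have hda := hval (2*a-1) (2*a) (by omega) (by omega) (by omega)
  have hdb := hval (2*b-1) (2*b) (by omega) (by omega) (by omega)
  have hA := hval (2*a-1) (2*b-1) (by omega) (by omega) (by omega)
  have hB := hval (2*a-1) (2*b) (by omega) (by omega) (by omega)
  have hC := hval (2*a) (2*b) (by omega) (by omega) (by omega)
  have hZ := hval (2*a) (2*b-1) (by omega) (by omega) (by omega)
  rw [hZ] at e1
  rw [hda, hC, hB] at e2
  rw [hA, hdb, hB] at e3
  rw [hZ, hA, hB, hC, hda, hdb]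
  clear hz hbij hval hface
  split_ifs at e1 e2 e3 ⊢
  all_goals try norm_num at e1
  all_goals try norm_num at e2
  all_goals try norm_num at e3
  all_goals try (first | norm_num | linarith)
  all_goals omega

/-- an element of `F` is uniquely determined by its `n` coordinates
`y (2i-1) (2i)`, `i ∈ {1,…,n}`. -/
theorem faceF_determined_by_diagonal (n : ℕ) (y y' : ℕ → ℕ → ℝ)
    (hy : y ∈ FaceF n) (hy' : y' ∈ FaceF n)
    (h : ∀ i, 1 ≤ i → i ≤ n → y (2 * i - 1) (2 * i) = y' (2 * i - 1) (2 * i)) :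
    y = y' := by
  funext i j
  by_cases hr : 1 ≤ i ∧ i < j ∧ j ≤ 2 * n
  · obtain ⟨h1, h2, h3⟩ := hr
    obtain ⟨a, rfl | rfl⟩ := Nat.even_or_odd' i <;>
      obtain ⟨b, rfl | rfl⟩ := Nat.even_or_odd' j
    · -- i = 2a, j = 2b
      obtain ⟨-, -, -, c⟩ := faceF_coords n a b y hy (by omega) (by omega) (by omega)
      obtain ⟨-, -, -, c'⟩ := faceF_coords n a b y' hy' (by omega) (by omega) (by omega)
      rw [c, c', h a (by omega) (by omega), h b (by omega) (by omega)]
    · -- i = 2a, j = 2b+1 = 2(b+1)-1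
      have e : 2 * b + 1 = 2 * (b+1) - 1 := by omega
      rw [e]
      obtain ⟨z, -, -, -⟩ := faceF_coords n a (b+1) y hy (by omega) (by omega) (by omega)
      obtain ⟨z', -, -, -⟩ := faceF_coords n a (b+1) y' hy' (by omega) (by omega) (by omega)
      rw [z, z']
    · -- i = 2a+1 = 2(a+1)-1, j = 2b
      have e : 2 * a + 1 = 2 * (a+1) - 1 := by omega
      rw [e]
      rcases eq_or_lt_of_le (show a + 1 ≤ b by omega) with rfl | hlt
      · exact h (a+1) (by omega) (by omega)
      · obtain ⟨-, -, B, -⟩ := faceF_coords n (a+1) b y hy (by omega) hlt (by omega)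
        obtain ⟨-, -, B', -⟩ := faceF_coords n (a+1) b y' hy' (by omega) hlt (by omega)
        rw [B, B', h (a+1) (by omega) (by omega), h b (by omega) (by omega)]
    · -- i = 2a+1, j = 2b+1
      have e1 : 2 * a + 1 = 2 * (a+1) - 1 := by omega
      have e2 : 2 * b + 1 = 2 * (b+1) - 1 := by omega
      rw [e1, e2]
      obtain ⟨-, A, -, -⟩ := faceF_coords n (a+1) (b+1) y hy (by omega) (by omega) (by omega)
      obtain ⟨-, A', -, -⟩ := faceF_coords n (a+1) (b+1) y' hy' (by omega) (by omega) (by omega)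
      rw [A, A', h (a+1) (by omega) (by omega), h (b+1) (by omega) (by omega)]
  · rw [hy.1.1 i j hr, hy'.1.1 i j hr]
end

section
/- For every n ∈ ℕ and every vector d ∈ {0,1}^n there exists y ∈ F such that y_{2i-1,2i} = d_i for all i ∈ {1,…,n}. -/
namespace FaceFProof

variable (n : ℕ) (d : ℕ → ℝ)

noncomputable def AA : ℕ := ((Finset.Icc 1 n).filter fun k => d k = 1).card
noncomputable def ss (i : ℕ) : ℕ :=
  ((Finset.Icc 1 n).filter fun k => i < k ∧ d k = 1).card
noncomputable def tt (i : ℕ) : ℕ :=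
  ((Finset.Icc 1 n).filter fun k => i < k ∧ d k ≠ 1).card

noncomputable def podd (i : ℕ) : ℕ :=
  if d i = 1 then ss n d i + 1 else AA n d + 2 * tt n d i + 2
noncomputable def peven (i : ℕ) : ℕ :=
  if d i = 1 then 2 * n - AA n d + ss n d i + 1 else AA n d + 2 * tt n d i + 1
noncomputable def pp (x : ℕ) : ℕ :=
  if x % 2 = 1 then podd n d ((x + 1) / 2) else peven n d (x / 2)

noncomputable def yy (a b : ℕ) : ℝ :=
  if 1 ≤ a ∧ a < b ∧ b ≤ 2 * n then
    (if pp n d a < pp n d b then (1 : ℝ) else 0) else 0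

lemma pp_odd (i : ℕ) (hi : 1 ≤ i) : pp n d (2 * i - 1) = podd n d i := by
  rw [pp, if_pos (by omega)]
  congr 1; omega

lemma pp_even (i : ℕ) : pp n d (2 * i) = peven n d i := by
  rw [pp, if_neg (by omega)]
  congr 1; omega

lemma AA_le : AA n d ≤ n := by
  have := Finset.card_filter_le (Finset.Icc 1 n) (fun k => d k = 1)
  simpa [AA, Nat.card_Icc] using this

lemma ss_lt (i : ℕ) (h1 : 1 ≤ i) (h2 : i ≤ n) (hdi : d i = 1) :
    ss n d i < AA n d := by
  apply Finset.card_lt_card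
  constructor
  · intro k hk
    simp only [Finset.mem_filter] at hk ⊢
    exact ⟨hk.1, hk.2.2⟩
  · intro hsub
    have hi : i ∈ (Finset.Icc 1 n).filter fun k => d k = 1 := by
      simp [Finset.mem_Icc, h1, h2, hdi]
    have := hsub hi
    simp only [Finset.mem_filter] at this
    omega

lemma ss_mono (i j : ℕ) (h1 : 1 ≤ j) (hij : i < j) (hj : j ≤ n) (hdj : d j = 1) :
    ss n d j < ss n d i := by
  apply Finset.card_lt_card
  constructor
  · intro k hk
    simp only [Finset.mem_filter] at hk ⊢
    exact ⟨hk.1, by omega, hk.2.2⟩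
  · intro hsub
    have hj' : j ∈ (Finset.Icc 1 n).filter fun k => i < k ∧ d k = 1 := by
      simp only [Finset.mem_filter, Finset.mem_Icc]
      exact ⟨⟨h1, hj⟩, hij, hdj⟩
    have := hsub hj'
    simp only [Finset.mem_filter] at this
    omega

lemma tt_mono (i j : ℕ) (h1 : 1 ≤ j) (hij : i < j) (hj : j ≤ n) (hdj : d j ≠ 1) :
    tt n d j < tt n d i := by
  apply Finset.card_lt_card
  constructor
  · intro k hk
    simp only [Finset.mem_filter] at hk ⊢
    exact ⟨hk.1, by omega, hk.2.2⟩
  · intro hsub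
    have hj' : j ∈ (Finset.Icc 1 n).filter fun k => i < k ∧ d k ≠ 1 := by
      simp only [Finset.mem_filter, Finset.mem_Icc]
      exact ⟨⟨h1, hj⟩, hij, hdj⟩
    have := hsub hj'
    simp only [Finset.mem_filter] at this
    omega

lemma att (i : ℕ) (h1 : 1 ≤ i) (h2 : i ≤ n) (hdi : d i ≠ 1) :
    AA n d + tt n d i < n := by
  classical
  set S1 := (Finset.Icc 1 n).filter (fun k => d k = 1) with hS1
  set S2 := (Finset.Icc 1 n).filter (fun k => i < k ∧ d k ≠ 1) with hS2
  have hdisj : Disjoint S1 S2 := by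
    rw [Finset.disjoint_left]
    intro a ha hb
    simp only [hS1, hS2, Finset.mem_filter] at ha hb
    exact hb.2.2 ha.2
  have hni : i ∉ S1 ∪ S2 := by
    simp only [hS1, hS2, Finset.mem_union, Finset.mem_filter]
    rintro (⟨_, h⟩ | ⟨_, h, _⟩)
    · exact hdi h
    · omega
  have hsub : insert i (S1 ∪ S2) ⊆ Finset.Icc 1 n := by
    intro a ha
    rcases Finset.mem_insert.mp ha with rfl | ha
    · simp only [Finset.mem_Icc]; omega
    · rcases Finset.mem_union.mp ha with h | h
      · exact Finset.mem_of_mem_filter a h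
      · exact Finset.mem_of_mem_filter a h
  have := Finset.card_le_card hsub
  rw [Finset.card_insert_of_notMem hni, Finset.card_union_of_disjoint hdisj,
    Nat.card_Icc] at this
  have hA : AA n d = S1.card := rfl
  have hT : tt n d i = S2.card := rfl
  omega

lemma decomp (x : ℕ) (h1 : 1 ≤ x) (h2 : x ≤ 2 * n) :
    ∃ i, 1 ≤ i ∧ i ≤ n ∧ (x = 2 * i - 1 ∨ x = 2 * i) :=
  ⟨(x + 1) / 2, by omega, by omega, by omega⟩

lemma pp_mapsTo : Set.MapsTo (pp n d) (Set.Icc 1 (2 * n)) (Set.Icc 1 (2 * n)) := by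
  intro x hx
  simp only [Set.mem_Icc] at hx ⊢
  obtain ⟨i, hi1, hi2, hxi⟩ := decomp n x hx.1 hx.2
  have hA := AA_le n d
  rcases hxi with rfl | rfl
  · rw [pp_odd n d i hi1, podd]
    split_ifs with hdi
    · have := ss_lt n d i hi1 hi2 hdi; omega
    · have := att n d i hi1 hi2 hdi; omega
  · rw [pp_even, peven]
    split_ifs with hdi
    · have := ss_lt n d i hi1 hi2 hdi; omega
    · have := att n d i hi1 hi2 hdi; omega

lemma podd_inj (i j : ℕ) (hi1 : 1 ≤ i) (hi2 : i ≤ n) (hj1 : 1 ≤ j) (hj2 : j ≤ n)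
    (h : podd n d i = podd n d j) : i = j := by
  by_contra hne
  have hA := AA_le n d
  rcases lt_trichotomy i j with hij | hij | hij
  · by_cases hdi : d i = 1 <;> by_cases hdj : d j = 1 <;>
      simp only [podd, hdi, hdj, if_true, if_false, eq_self_iff_true, not_true,
        not_false_iff, ite_true, ite_false] at h
    · have := ss_mono n d i j hj1 hij hj2 hdj; omega
    · have h1 := ss_lt n d i hi1 hi2 hdi; have h2 := att n d j hj1 hj2 hdj; omega
    · have h1 := ss_lt n d j hj1 hj2 hdj; have h2 := att n d i hi1 hi2 hdi; omega
    · have := tt_mono n d i j hj1 hij hj2 hdj; omega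
  · exact hne hij
  · by_cases hdi : d i = 1 <;> by_cases hdj : d j = 1 <;>
      simp only [podd, hdi, hdj, if_true, if_false, eq_self_iff_true, not_true,
        not_false_iff, ite_true, ite_false] at h
    · have := ss_mono n d j i hi1 hij hi2 hdi; omega
    · have h1 := ss_lt n d i hi1 hi2 hdi; have h2 := att n d j hj1 hj2 hdj; omega
    · have h1 := ss_lt n d j hj1 hj2 hdj; have h2 := att n d i hi1 hi2 hdi; omega
    · have := tt_mono n d j i hi1 hij hi2 hdi; omega

lemma peven_inj (i j : ℕ) (hi1 : 1 ≤ i) (hi2 : i ≤ n) (hj1 : 1 ≤ j) (hj2 : j ≤ n)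
    (h : peven n d i = peven n d j) : i = j := by
  by_contra hne
  have hA := AA_le n d
  rcases lt_trichotomy i j with hij | hij | hij
  · by_cases hdi : d i = 1 <;> by_cases hdj : d j = 1 <;>
      simp only [peven, hdi, hdj, if_true, if_false, eq_self_iff_true, not_true,
        not_false_iff, ite_true, ite_false] at h
    · have := ss_mono n d i j hj1 hij hj2 hdj; omega
    · have h1 := ss_lt n d i hi1 hi2 hdi; have h2 := att n d j hj1 hj2 hdj; omega
    · have h1 := ss_lt n d j hj1 hj2 hdj; have h2 := att n d i hi1 hi2 hdi; omega
    · have := tt_mono n d i j hj1 hij hj2 hdj; omega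
  · exact hne hij
  · by_cases hdi : d i = 1 <;> by_cases hdj : d j = 1 <;>
      simp only [peven, hdi, hdj, if_true, if_false, eq_self_iff_true, not_true,
        not_false_iff, ite_true, ite_false] at h
    · have := ss_mono n d j i hi1 hij hi2 hdi; omega
    · have h1 := ss_lt n d i hi1 hi2 hdi; have h2 := att n d j hj1 hj2 hdj; omega
    · have h1 := ss_lt n d j hj1 hj2 hdj; have h2 := att n d i hi1 hi2 hdi; omega
    · have := tt_mono n d j i hi1 hij hi2 hdi; omega

lemma podd_ne_peven (i j : ℕ) (hi1 : 1 ≤ i) (hi2 : i ≤ n) (hj1 : 1 ≤ j) (hj2 : j ≤ n) :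
    podd n d i ≠ peven n d j := by
  have hA := AA_le n d
  by_cases hdi : d i = 1 <;> by_cases hdj : d j = 1 <;>
    simp only [podd, peven, hdi, hdj, if_true, if_false, eq_self_iff_true, not_true,
      not_false_iff, ite_true, ite_false]
  · have h1 := ss_lt n d i hi1 hi2 hdi; have h2 := ss_lt n d j hj1 hj2 hdj; omega
  · have h1 := ss_lt n d i hi1 hi2 hdi; omega
  · have h1 := ss_lt n d j hj1 hj2 hdj; have h2 := att n d i hi1 hi2 hdi; omega
  · omega

lemma pp_injOn : Set.InjOn (pp n d) (Set.Icc 1 (2 * n)) := by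
  intro x hx y hy hxy
  simp only [Set.mem_Icc] at hx hy
  obtain ⟨i, hi1, hi2, hxi⟩ := decomp n x hx.1 hx.2
  obtain ⟨j, hj1, hj2, hyj⟩ := decomp n y hy.1 hy.2
  rcases hxi with rfl | rfl <;> rcases hyj with rfl | rfl
  · rw [pp_odd n d i hi1, pp_odd n d j hj1] at hxy
    have := podd_inj n d i j hi1 hi2 hj1 hj2 hxy; omega
  · rw [pp_odd n d i hi1, pp_even] at hxy
    exact absurd hxy (podd_ne_peven n d i j hi1 hi2 hj1 hj2)
  · rw [pp_even, pp_odd n d j hj1] at hxy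
    exact absurd hxy.symm (podd_ne_peven n d j i hj1 hj2 hi1 hi2)
  · rw [pp_even, pp_even] at hxy
    have := peven_inj n d i j hi1 hi2 hj1 hj2 hxy; omega

lemma pp_bijOn : Set.BijOn (pp n d) (Set.Icc 1 (2 * n)) (Set.Icc 1 (2 * n)) :=
  ((Set.finite_Icc 1 (2 * n)).injOn_iff_bijOn_of_mapsTo (pp_mapsTo n d)).mp
    (pp_injOn n d)

lemma eq1 (i j : ℕ) (hi1 : 1 ≤ i) (hij : i < j) (hj2 : j ≤ n) :
    yy n d (2 * i) (2 * j - 1) = 0 := by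
  have hj1 : 1 ≤ j := by omega
  have hi2 : i ≤ n := by omega
  have hA := AA_le n d
  rw [yy, pp_even n d i, pp_odd n d j hj1,
    if_pos (show 1 ≤ 2 * i ∧ 2 * i < 2 * j - 1 ∧ 2 * j - 1 ≤ 2 * n by omega)]
  rw [if_neg]
  by_cases hdi : d i = 1 <;> by_cases hdj : d j = 1 <;>
    simp only [podd, peven, hdi, hdj, if_true, if_false, eq_self_iff_true, not_true,
      not_false_iff, ite_true, ite_false, not_lt]
  · have h1 := ss_lt n d j hj1 hj2 hdj; omega
  · have h1 := att n d j hj1 hj2 hdj; omega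
  · have h1 := ss_lt n d j hj1 hj2 hdj; have h2 := att n d i hi1 hi2 hdi; omega
  · have h1 := att n d j hj1 hj2 hdj
    have h2 := tt_mono n d i j hj1 hij hj2 hdj; omega

lemma eq2 (i j : ℕ) (hi1 : 1 ≤ i) (hij : i < j) (hj2 : j ≤ n) :
    yy n d (2 * i - 1) (2 * i) + yy n d (2 * i) (2 * j) - yy n d (2 * i - 1) (2 * j)
      = 0 := by
  have hj1 : 1 ≤ j := by omega
  have hi2 : i ≤ n := by omega
  have hA := AA_le n d
  rw [yy, yy, yy, pp_odd n d i hi1, pp_even n d i, pp_even n d j,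
    if_pos (show 1 ≤ 2 * i - 1 ∧ 2 * i - 1 < 2 * i ∧ 2 * i ≤ 2 * n by omega),
    if_pos (show 1 ≤ 2 * i ∧ 2 * i < 2 * j ∧ 2 * j ≤ 2 * n by omega),
    if_pos (show 1 ≤ 2 * i - 1 ∧ 2 * i - 1 < 2 * j ∧ 2 * j ≤ 2 * n by omega)]
  by_cases hdi : d i = 1 <;> by_cases hdj : d j = 1 <;>
    simp only [podd, peven, hdi, hdj, if_true, if_false, eq_self_iff_true, not_true,
      not_false_iff, ite_true, ite_false]
  · have h1 := ss_lt n d i hi1 hi2 hdi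
    have h2 := ss_mono n d i j hj1 hij hj2 hdj
    split_ifs <;> first | (exfalso; omega) | norm_num
  · have h1 := ss_lt n d i hi1 hi2 hdi
    have h2 := att n d j hj1 hj2 hdj
    split_ifs <;> first | (exfalso; omega) | norm_num
  · have h1 := att n d i hi1 hi2 hdi
    have h2 := ss_lt n d j hj1 hj2 hdj
    split_ifs <;> first | (exfalso; omega) | norm_num
  · have h1 := att n d i hi1 hi2 hdi
    have h2 := tt_mono n d i j hj1 hij hj2 hdj
    split_ifs <;> first | (exfalso; omega) | norm_num

lemma eq3 (i j : ℕ) (hi1 : 1 ≤ i) (hij : i < j) (hj2 : j ≤ n) :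
    yy n d (2 * i - 1) (2 * j - 1) + yy n d (2 * j - 1) (2 * j)
      - yy n d (2 * i - 1) (2 * j) = 0 := by
  have hj1 : 1 ≤ j := by omega
  have hi2 : i ≤ n := by omega
  have hA := AA_le n d
  rw [yy, yy, yy, pp_odd n d i hi1, pp_odd n d j hj1, pp_even n d j,
    if_pos (show 1 ≤ 2 * i - 1 ∧ 2 * i - 1 < 2 * j - 1 ∧ 2 * j - 1 ≤ 2 * n by omega),
    if_pos (show 1 ≤ 2 * j - 1 ∧ 2 * j - 1 < 2 * j ∧ 2 * j ≤ 2 * n by omega),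
    if_pos (show 1 ≤ 2 * i - 1 ∧ 2 * i - 1 < 2 * j ∧ 2 * j ≤ 2 * n by omega)]
  by_cases hdi : d i = 1 <;> by_cases hdj : d j = 1 <;>
    simp only [podd, peven, hdi, hdj, if_true, if_false, eq_self_iff_true, not_true,
      not_false_iff, ite_true, ite_false]
  · have h1 := ss_lt n d i hi1 hi2 hdi
    have h2 := ss_mono n d i j hj1 hij hj2 hdj
    split_ifs <;> first | (exfalso; omega) | norm_num
  · have h1 := ss_lt n d i hi1 hi2 hdi
    have h2 := att n d j hj1 hj2 hdj
    split_ifs <;> first | (exfalso; omega) | norm_num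
  · have h1 := att n d i hi1 hi2 hdi
    have h2 := ss_lt n d j hj1 hj2 hdj
    split_ifs <;> first | (exfalso; omega) | norm_num
  · have h1 := att n d i hi1 hi2 hdi
    have h2 := tt_mono n d i j hj1 hij hj2 hdj
    split_ifs <;> first | (exfalso; omega) | norm_num

lemma diag (i : ℕ) (hi1 : 1 ≤ i) (hi2 : i ≤ n) (hd0 : d i = 0 ∨ d i = 1) :
    yy n d (2 * i - 1) (2 * i) = d i := by
  have hA := AA_le n d
  rw [yy, pp_odd n d i hi1, pp_even n d i,
    if_pos (show 1 ≤ 2 * i - 1 ∧ 2 * i - 1 < 2 * i ∧ 2 * i ≤ 2 * n by omega)]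
  by_cases hdi : d i = 1
  · rw [hdi, if_pos]
    simp only [podd, peven, hdi, if_true, eq_self_iff_true, ite_true]
    omega
  · rw [hd0.resolve_right hdi, if_neg]
    simp only [podd, peven, hdi, if_false, ite_false, not_lt]
    omega

end FaceFProof

/-- for every 0/1 vector `d ∈ {0,1}^n` there exists `y ∈ F` with
`y (2i-1) (2i) = d i` for all `i ∈ {1,…,n}`. -/
theorem faceF_realizes_all_diagonals (n : ℕ) (d : ℕ → ℝ)
    (hd : ∀ i, 1 ≤ i → i ≤ n → d i = 0 ∨ d i = 1) :
    ∃ y ∈ FaceF n, ∀ i, 1 ≤ i → i ≤ n → y (2 * i - 1) (2 * i) = d i := by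
  classical
  refine ⟨FaceFProof.yy n d, ⟨⟨fun i j h => if_neg h, FaceFProof.pp n d,
    FaceFProof.pp_bijOn n d, fun i j h1 h2 h3 => if_pos ⟨h1, h2, h3⟩⟩, ?_⟩, ?_⟩
  · intro i j hi1 hij hjn
    exact ⟨FaceFProof.eq1 n d i j hi1 hij hjn, FaceFProof.eq2 n d i j hi1 hij hjn,
      FaceFProof.eq3 n d i j hi1 hij hjn⟩
  · intro i hi1 hi2
    exact FaceFProof.diag n d i hi1 hi2 (hd i hi1 hi2)
end

section
/- For every n ∈ ℕ, the permutation π of {1,…,2n} constructed from a vector d ∈ {0,1}^n as follows yields a characteristic vector lying in F with y_{2i-1,2i} = d_i for all i: list the indices with d_i = 0 in decreasing order as i_1 > … > i_k and the indices with d_i = 1 in decreasing order as i′_1 > … > i′_{n-k}, and set π(2i_s − 1) = n − k + 2s, π(2i_s) = n − k + 2s − 1 for s ∈ {1,…,k}, and π(2i′_t − 1) = t, π(2i′_t) = n + k + t for t ∈ {1,…,n−k}. -/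
/-- given `d ∈ {0,1}^n`, let `e` enumerate the indices with
`d i = 0` in decreasing order `i₁ > … > i_k`, and `e'` those with `d i = 1` in
decreasing order `i′₁ > … > i′_{n-k}`. If `π` satisfies
`π (2 iₛ - 1) = n - k + 2 s`, `π (2 iₛ) = n - k + 2 s - 1` for `s ∈ {1,…,k}` and
`π (2 i′ₜ - 1) = t`, `π (2 i′ₜ) = n + k + t` for `t ∈ {1,…,n-k}`, then the
characteristic vector of `π` lies in `F` and satisfies
`y (2 i - 1) (2 i) = d i` for all `i ∈ {1,…,n}`. -/
theorem faceF_explicit_permutation (n : ℕ) (d : ℕ → ℝ)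
    (hd : ∀ i, 1 ≤ i → i ≤ n → d i = 0 ∨ d i = 1)
    (k : ℕ) (e e' : ℕ → ℕ)
    (he : Set.BijOn e (Set.Icc 1 k) {i | i ∈ Set.Icc 1 n ∧ d i = 0})
    (heAnti : StrictAntiOn e (Set.Icc 1 k))
    (he' : Set.BijOn e' (Set.Icc 1 (n - k)) {i | i ∈ Set.Icc 1 n ∧ d i = 1})
    (he'Anti : StrictAntiOn e' (Set.Icc 1 (n - k)))
    (π : ℕ → ℕ)
    (hπ0 : ∀ s, 1 ≤ s → s ≤ k →
      π (2 * e s - 1) = n - k + 2 * s ∧ π (2 * e s) = n - k + 2 * s - 1)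
    (hπ1 : ∀ t, 1 ≤ t → t ≤ n - k →
      π (2 * e' t - 1) = t ∧ π (2 * e' t) = n + k + t) :
    (fun i j => if 1 ≤ i ∧ i < j ∧ j ≤ 2 * n then
        (if π i < π j then (1 : ℝ) else 0) else 0) ∈ FaceF n ∧
    ∀ i, 1 ≤ i → i ≤ n → (if π (2 * i - 1) < π (2 * i) then (1 : ℝ) else 0) = d i := by
  have hkn : k ≤ n := by
    have h1 : (Set.Icc 1 k).ncard = {i | i ∈ Set.Icc 1 n ∧ d i = 0}.ncard := by
      rw [← he.image_eq, Set.ncard_image_of_injOn he.injOn]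
    have h2 : {i | i ∈ Set.Icc 1 n ∧ d i = 0}.ncard ≤ (Set.Icc 1 n).ncard :=
      Set.ncard_le_ncard (fun x hx => hx.1) (Set.finite_Icc _ _)
    simp [← Finset.coe_Icc, Set.ncard_coe_finset, Nat.card_Icc] at h1 h2
    omega
  have P : ∀ i, 1 ≤ i → i ≤ n →
      (∃ s, 1 ≤ s ∧ s ≤ k ∧ e s = i ∧ d i = 0 ∧
        π (2 * i - 1) = n - k + 2 * s ∧ π (2 * i) = n - k + 2 * s - 1) ∨
      (∃ t, 1 ≤ t ∧ t ≤ n - k ∧ e' t = i ∧ d i = 1 ∧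
        π (2 * i - 1) = t ∧ π (2 * i) = n + k + t) := by
    intro i h1 h2
    rcases hd i h1 h2 with h0 | h1'
    · obtain ⟨s, hs, hes⟩ := he.surjOn (show i ∈ _ from ⟨⟨h1, h2⟩, h0⟩)
      rw [Set.mem_Icc] at hs
      have hv := hπ0 s hs.1 hs.2
      rw [hes] at hv
      exact Or.inl ⟨s, hs.1, hs.2, hes, h0, hv.1, hv.2⟩
    · obtain ⟨t, ht, het⟩ := he'.surjOn (show i ∈ _ from ⟨⟨h1, h2⟩, h1'⟩)
      rw [Set.mem_Icc] at ht
      have hv := hπ1 t ht.1 ht.2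
      rw [het] at hv
      exact Or.inr ⟨t, ht.1, ht.2, het, h1', hv.1, hv.2⟩
  have hordE : ∀ s s', 1 ≤ s → s ≤ k → 1 ≤ s' → s' ≤ k → e s < e s' → s' < s := by
    intro s s' a b c dd h
    rcases lt_trichotomy s s' with hc | hc | hc
    · exact absurd (heAnti (Set.mem_Icc.mpr ⟨a, b⟩) (Set.mem_Icc.mpr ⟨c, dd⟩) hc) (by omega)
    · subst hc; exact absurd h (lt_irrefl _)
    · exact hc
  have hordE' : ∀ t t', 1 ≤ t → t ≤ n - k → 1 ≤ t' → t' ≤ n - k → e' t < e' t' → t' < t := by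
    intro s s' a b c dd h
    rcases lt_trichotomy s s' with hc | hc | hc
    · exact absurd (he'Anti (Set.mem_Icc.mpr ⟨a, b⟩) (Set.mem_Icc.mpr ⟨c, dd⟩) hc) (by omega)
    · subst hc; exact absurd h (lt_irrefl _)
    · exact hc
  have hmap : Set.MapsTo π (Set.Icc 1 (2 * n)) (Set.Icc 1 (2 * n)) := by
    intro x hx
    rw [Set.mem_Icc] at hx ⊢
    obtain ⟨i, hi1, hi2, hx'⟩ : ∃ i, 1 ≤ i ∧ i ≤ n ∧ (x = 2 * i - 1 ∨ x = 2 * i) :=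
      ⟨(x + 1) / 2, by omega, by omega, by omega⟩
    rcases P i hi1 hi2 with ⟨s, hs1, hs2, _, _, hA, hB⟩ | ⟨t, ht1, ht2, _, _, hA, hB⟩ <;>
      rcases hx' with h | h <;> rw [h]
    · rw [hA]; omega
    · rw [hB]; omega
    · rw [hA]; omega
    · rw [hB]; omega
  have hsurj : Set.SurjOn π (Set.Icc 1 (2 * n)) (Set.Icc 1 (2 * n)) := by
    intro m hm
    rw [Set.mem_Icc] at hm
    by_cases h1 : m ≤ n - k
    · have hmem := he'.mapsTo (Set.mem_Icc.mpr ⟨hm.1, h1⟩)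
      have h' := Set.mem_Icc.mp hmem.1
      exact ⟨2 * e' m - 1, Set.mem_Icc.mpr (by omega), (hπ1 m hm.1 h1).1⟩
    · by_cases h2 : m ≤ n + k
      · rcases Nat.even_or_odd (m - (n - k)) with ⟨r, hr⟩ | ⟨r, hr⟩
        · have hr1 : 1 ≤ r := by omega
          have hr2 : r ≤ k := by omega
          have hmem := he.mapsTo (Set.mem_Icc.mpr ⟨hr1, hr2⟩)
          have h' := Set.mem_Icc.mp hmem.1
          have hv := (hπ0 r hr1 hr2).1
          exact ⟨2 * e r - 1, Set.mem_Icc.mpr (by omega), by omega⟩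
        · have hr1 : 1 ≤ r + 1 := by omega
          have hr2 : r + 1 ≤ k := by omega
          have hmem := he.mapsTo (Set.mem_Icc.mpr ⟨hr1, hr2⟩)
          have h' := Set.mem_Icc.mp hmem.1
          have hv := (hπ0 (r + 1) hr1 hr2).2
          exact ⟨2 * e (r + 1), Set.mem_Icc.mpr (by omega), by omega⟩
      · have ht1 : 1 ≤ m - (n + k) := by omega
        have ht2 : m - (n + k) ≤ n - k := by omega
        have hmem := he'.mapsTo (Set.mem_Icc.mpr ⟨ht1, ht2⟩)
        have h' := Set.mem_Icc.mp hmem.1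
        have hv := (hπ1 (m - (n + k)) ht1 ht2).2
        exact ⟨2 * e' (m - (n + k)), Set.mem_Icc.mpr (by omega), by omega⟩
  have hbij : Set.BijOn π (Set.Icc 1 (2 * n)) (Set.Icc 1 (2 * n)) :=
    (Set.Finite.surjOn_iff_bijOn_of_mapsTo (Set.finite_Icc _ _) hmap).mp hsurj
  have hY : ∀ a b, 1 ≤ a → a < b → b ≤ 2 * n →
      (if 1 ≤ a ∧ a < b ∧ b ≤ 2 * n then (if π a < π b then (1 : ℝ) else 0) else 0)
        = if π a < π b then (1 : ℝ) else 0 := fun a b h1 h2 h3 => if_pos ⟨h1, h2, h3⟩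
  refine ⟨⟨⟨fun i j h => if_neg h, π, hbij, fun i j h1 h2 h3 => if_pos ⟨h1, h2, h3⟩⟩, ?_⟩, ?_⟩
  · intro i j hi hij hjn
    beta_reduce
    rw [hY (2 * i) (2 * j - 1) (by omega) (by omega) (by omega),
      hY (2 * i - 1) (2 * i) (by omega) (by omega) (by omega),
      hY (2 * i) (2 * j) (by omega) (by omega) (by omega),
      hY (2 * i - 1) (2 * j) (by omega) (by omega) (by omega),
      hY (2 * i - 1) (2 * j - 1) (by omega) (by omega) (by omega),
      hY (2 * j - 1) (2 * j) (by omega) (by omega) (by omega)]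
    rcases P i hi (by omega) with ⟨s, hs1, hs2, hes, _, hA, hB⟩ | ⟨t, ht1, ht2, het, _, hA, hB⟩ <;>
      rcases P j (by omega) hjn with ⟨s', hs1', hs2', hes', _, hA', hB'⟩ |
        ⟨t', ht1', ht2', het', _, hA', hB'⟩ <;>
      rw [hA, hB, hA', hB']
    · have hlt : s' < s := hordE s s' hs1 hs2 hs1' hs2' (by omega)
      refine ⟨?_, ?_, ?_⟩ <;> split_ifs <;> first | (exfalso; omega) | norm_num
    · refine ⟨?_, ?_, ?_⟩ <;> split_ifs <;> first | (exfalso; omega) | norm_num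
    · refine ⟨?_, ?_, ?_⟩ <;> split_ifs <;> first | (exfalso; omega) | norm_num
    · have hlt : t' < t := hordE' t t' ht1 ht2 ht1' ht2' (by omega)
      refine ⟨?_, ?_, ?_⟩ <;> split_ifs <;> first | (exfalso; omega) | norm_num
  · intro i h1 h2
    rcases P i h1 h2 with ⟨s, hs1, hs2, _, hd0, hA, hB⟩ | ⟨t, ht1, ht2, _, hd1, hA, hB⟩
    · rw [hA, hB, if_neg (by omega), hd0]
    · rw [hA, hB, if_pos (by omega), hd1]
end

section
/- For every n ∈ ℕ, the inverse of the bijection β : F → BQP(n) is the map sending x = (x_{ij}) ∈ BQP(n) to the vector y with y_{2i-1,2i} = x_{ii} for i ∈ {1,…,n}, y_{2i,2j} = x_{jj} − x_{ij} for 1 ≤ i < j ≤ n, y_{2i,2j-1} = 0, y_{2i-1,2j} = x_{ii} + x_{jj} − x_{ij}, and y_{2i-1,2j-1} = x_{ii} − x_{ij} for 1 ≤ i < j ≤ n; in particular this map is affine and sends BQP(n) bijectively onto F, so β is an affine equivalence between conv(F) and conv(BQP(n)). -/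
/-- The inverse map `γ` sending `x ∈ BQP n` to `y` with
`y (2i-1) (2i) = x i i`, `y (2i) (2j) = x j j - x i j`, `y (2i) (2j-1) = 0`,
`y (2i-1) (2j) = x i i + x j j - x i j` and `y (2i-1) (2j-1) = x i i - x i j`
for `1 ≤ i < j ≤ n` (coordinates outside the index range are `0`). -/
def gamma (n : ℕ) (x : ℕ → ℕ → ℝ) : ℕ → ℕ → ℝ := fun a b =>
  if 1 ≤ a ∧ a < b ∧ b ≤ 2 * n then
    if a % 2 = 1 then
      if b = a + 1 then x ((a + 1) / 2) ((a + 1) / 2)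
      else if b % 2 = 0 then
        x ((a + 1) / 2) ((a + 1) / 2) + x (b / 2) (b / 2) - x ((a + 1) / 2) (b / 2)
      else x ((a + 1) / 2) ((a + 1) / 2) - x ((a + 1) / 2) ((b + 1) / 2)
    else
      if b % 2 = 0 then x (b / 2) (b / 2) - x (a / 2) (b / 2)
      else 0
  else 0

section helpers
variable (n : ℕ) (x y : ℕ → ℕ → ℝ)

lemma gamma_zero {a b : ℕ} (h : ¬(1 ≤ a ∧ a < b ∧ b ≤ 2 * n)) : gamma n x a b = 0 := by
  simp only [gamma]; rw [if_neg h]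

lemma gamma_oe {i : ℕ} (h1 : 1 ≤ i) (h2 : i ≤ n) :
    gamma n x (2 * i - 1) (2 * i) = x i i := by
  simp only [gamma]
  rw [if_pos (by omega), if_pos (by omega : (2 * i - 1) % 2 = 1),
    if_pos (by omega : 2 * i = 2 * i - 1 + 1), show (2 * i - 1 + 1) / 2 = i by omega]

lemma gamma_ee {i j : ℕ} (h1 : 1 ≤ i) (h2 : i < j) (h3 : j ≤ n) :
    gamma n x (2 * i) (2 * j) = x j j - x i j := by
  simp only [gamma]
  rw [if_pos (by omega), if_neg (by omega : ¬ (2 * i) % 2 = 1),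
    if_pos (by omega : (2 * j) % 2 = 0), show 2 * j / 2 = j by omega,
    show 2 * i / 2 = i by omega]

lemma gamma_eo {i j : ℕ} (h1 : 1 ≤ i) (h2 : i < j) (h3 : j ≤ n) :
    gamma n x (2 * i) (2 * j - 1) = 0 := by
  simp only [gamma]
  rw [if_pos (by omega), if_neg (by omega : ¬ (2 * i) % 2 = 1),
    if_neg (by omega : ¬ (2 * j - 1) % 2 = 0)]

lemma gamma_oe' {i j : ℕ} (h1 : 1 ≤ i) (h2 : i < j) (h3 : j ≤ n) :
    gamma n x (2 * i - 1) (2 * j) = x i i + x j j - x i j := by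
  simp only [gamma]
  rw [if_pos (by omega), if_pos (by omega : (2 * i - 1) % 2 = 1),
    if_neg (by omega : ¬ 2 * j = 2 * i - 1 + 1), if_pos (by omega : (2 * j) % 2 = 0),
    show (2 * i - 1 + 1) / 2 = i by omega, show 2 * j / 2 = j by omega]

lemma gamma_oo {i j : ℕ} (h1 : 1 ≤ i) (h2 : i < j) (h3 : j ≤ n) :
    gamma n x (2 * i - 1) (2 * j - 1) = x i i - x i j := by
  simp only [gamma]
  rw [if_pos (by omega), if_pos (by omega : (2 * i - 1) % 2 = 1),
    if_neg (by omega : ¬ 2 * j - 1 = 2 * i - 1 + 1),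
    if_neg (by omega : ¬ (2 * j - 1) % 2 = 0),
    show (2 * i - 1 + 1) / 2 = i by omega, show (2 * j - 1 + 1) / 2 = j by omega]

lemma beta_diag {i : ℕ} (h1 : 1 ≤ i) (h2 : i ≤ n) :
    beta n y i i = y (2 * i - 1) (2 * i) := by
  simp only [beta]; rw [if_pos ⟨h1, trivial, h2⟩]

lemma beta_lt {i j : ℕ} (h1 : 1 ≤ i) (h2 : i < j) (h3 : j ≤ n) :
    beta n y i j = y (2 * j - 1) (2 * j) - y (2 * i) (2 * j) := by
  simp only [beta]; rw [if_neg (by omega), if_pos ⟨h1, h2, h3⟩]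

lemma beta_zero {i j : ℕ} (h : ¬(1 ≤ i ∧ i ≤ j ∧ j ≤ n)) : beta n y i j = 0 := by
  simp only [beta]; rw [if_neg (by omega), if_neg (by omega)]

end helpers

noncomputable def gammaLin (n : ℕ) : (ℕ → ℕ → ℝ) →ₗ[ℝ] (ℕ → ℕ → ℝ) where
  toFun := gamma n
  map_add' x y := by
    funext a b
    simp only [gamma, Pi.add_apply]
    split_ifs <;> ring
  map_smul' c x := by
    funext a b
    simp only [gamma, Pi.smul_apply, smul_eq_mul, RingHom.id_apply]
    split_ifs <;> ring

noncomputable def betaLin (n : ℕ) : (ℕ → ℕ → ℝ) →ₗ[ℝ] (ℕ → ℕ → ℝ) where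
  toFun := beta n
  map_add' x y := by
    funext a b
    simp only [beta, Pi.add_apply]
    split_ifs <;> ring
  map_smul' c x := by
    funext a b
    simp only [beta, Pi.smul_apply, smul_eq_mul, RingHom.id_apply]
    split_ifs <;> ring

noncomputable def key (n : ℕ) (x : ℕ → ℕ → ℝ) (a : ℕ) : ℕ :=
  if a % 2 = 1 then
    if x ((a + 1) / 2) ((a + 1) / 2) = 1 then n - (a + 1) / 2
    else n + 2 * (n - (a + 1) / 2) + 1
  else
    if x (a / 2) (a / 2) = 1 then 3 * n + (n - a / 2) else n + 2 * (n - a / 2)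

lemma key_odd (n : ℕ) (x : ℕ → ℕ → ℝ) {i : ℕ} (h : 1 ≤ i) :
    key n x (2 * i - 1) =
      if x i i = 1 then n - i else n + 2 * (n - i) + 1 := by
  simp only [key]
  rw [if_pos (by omega : (2 * i - 1) % 2 = 1), show (2 * i - 1 + 1) / 2 = i by omega]

lemma key_even (n : ℕ) (x : ℕ → ℕ → ℝ) {i : ℕ} (_h : 1 ≤ i) :
    key n x (2 * i) =
      if x i i = 1 then 3 * n + (n - i) else n + 2 * (n - i) := by
  simp only [key]
  rw [if_neg (by omega : ¬ (2 * i) % 2 = 1), show 2 * i / 2 = i by omega]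

lemma aux_ind (pu pv pw pt ps : Prop) [Decidable pu] [Decidable pv] [Decidable pw]
    [Decidable pt] [Decidable ps] (hA : pv → ps)
    (e2 : (if pu then (1:ℝ) else 0) + (if pv then (1:ℝ) else 0)
        - (if pw then (1:ℝ) else 0) = 0)
    (e3 : (if pt then (1:ℝ) else 0) + (if ps then (1:ℝ) else 0)
        - (if pw then (1:ℝ) else 0) = 0) :
    ((if ps then (1:ℝ) else 0) - (if pv then (1:ℝ) else 0)
        = (if pu then (1:ℝ) else 0) * (if ps then (1:ℝ) else 0)) ∧
    ((if ps then (1:ℝ) else 0) - (if pv then (1:ℝ) else 0) = 0 ∨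
     (if ps then (1:ℝ) else 0) - (if pv then (1:ℝ) else 0) = 1) := by
  constructor <;>
    (split_ifs at e2 e3 ⊢ <;>
      first
        | (norm_num at e2; done)
        | (norm_num at e3; done)
        | tauto
        | norm_num)

lemma beta_mem_BQP (n : ℕ) {y : ℕ → ℕ → ℝ} (hy : y ∈ FaceF n) : beta n y ∈ BQP n := by
  obtain ⟨⟨hy0, π, hπ, hπv⟩, hyeq⟩ := hy
  have main : ∀ i j, 1 ≤ i → i < j → j ≤ n →
      (beta n y i j = beta n y i i * beta n y j j) ∧
      (beta n y i j = 0 ∨ beta n y i j = 1) := by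
    intro i j h1 h2 h3
    have e1 := (hyeq i j h1 h2 h3).1
    have e2 := (hyeq i j h1 h2 h3).2.1
    have e3 := (hyeq i j h1 h2 h3).2.2
    rw [hπv (2*i) (2*j-1) (by omega) (by omega) (by omega)] at e1
    have hA : ¬ (π (2*i) < π (2*j-1)) := by
      intro h; rw [if_pos h] at e1; norm_num at e1
    rw [hπv (2*i-1) (2*i) (by omega) (by omega) (by omega),
        hπv (2*i) (2*j) (by omega) (by omega) (by omega),
        hπv (2*i-1) (2*j) (by omega) (by omega) (by omega)] at e2
    rw [hπv (2*i-1) (2*j-1) (by omega) (by omega) (by omega),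
        hπv (2*j-1) (2*j) (by omega) (by omega) (by omega),
        hπv (2*i-1) (2*j) (by omega) (by omega) (by omega)] at e3
    have hvs : π (2*i) < π (2*j) → π (2*j-1) < π (2*j) := fun h => by omega
    rw [beta_lt n y h1 h2 h3, beta_diag n y h1 (by omega), beta_diag n y (by omega) h3,
        hπv (2*j-1) (2*j) (by omega) (by omega) (by omega),
        hπv (2*i) (2*j) (by omega) (by omega) (by omega),
        hπv (2*i-1) (2*i) (by omega) (by omega) (by omega)]
    exact ⟨(aux_ind _ _ _ _ _ hvs e2 e3).1, (aux_ind _ _ _ _ _ hvs e2 e3).2⟩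
  refine ⟨fun i j h => beta_zero n y h, ?_, fun i j h1 h2 h3 => (main i j h1 h2 h3).1⟩
  intro i j h1 h2 h3
  rcases eq_or_lt_of_le h2 with rfl | hlt
  · rw [beta_diag n y h1 h3, hπv (2*i-1) (2*i) (by omega) (by omega) (by omega)]
    split_ifs <;> simp
  · exact (main i j h1 hlt h3).2

lemma gamma_mem_FaceF (n : ℕ) {x : ℕ → ℕ → ℝ} (hx : x ∈ BQP n) : gamma n x ∈ FaceF n := by
  obtain ⟨hx0, hx01, hxp⟩ := hx
  have hform : ∀ a, 1 ≤ a → a ≤ 2*n → ∃ i, 1 ≤ i ∧ i ≤ n ∧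
      ((a = 2*i-1 ∧ (key n x a = n - i ∨ key n x a = n+2*(n-i)+1)) ∨
       (a = 2*i ∧ (key n x a = 3*n+(n-i) ∨ key n x a = n+2*(n-i)))) := by
    intro a h1 h2
    rcases Nat.mod_two_eq_zero_or_one a with hp | hp
    · obtain ⟨i, rfl⟩ : ∃ i, a = 2*i := ⟨a/2, by omega⟩
      refine ⟨i, by omega, by omega, Or.inr ⟨rfl, ?_⟩⟩
      rw [key_even n x (by omega)]
      rcases hx01 i i (by omega) le_rfl (by omega) with h | h
      · right; rw [if_neg (by rw [h]; norm_num)]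
      · left; rw [if_pos h]
    · obtain ⟨i, rfl⟩ : ∃ i, a = 2*i - 1 := ⟨(a+1)/2, by omega⟩
      refine ⟨i, by omega, by omega, Or.inl ⟨rfl, ?_⟩⟩
      rw [key_odd n x (by omega)]
      rcases hx01 i i (by omega) le_rfl (by omega) with h | h
      · right; rw [if_neg (by rw [h]; norm_num)]
      · left; rw [if_pos h]
  set π : ℕ → ℕ :=
    fun a => ((Finset.Icc 1 (2*n)).filter (fun b => key n x b ≤ key n x a)).card with hπdef
  have hmono : ∀ a b : ℕ, a ∈ Finset.Icc 1 (2*n) → b ∈ Finset.Icc 1 (2*n) →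
      (π a < π b ↔ key n x a < key n x b) := by
    intro a b _ha hb
    constructor
    · intro h
      by_contra hk
      push_neg at hk
      have hsub : (Finset.Icc 1 (2*n)).filter (fun c => key n x c ≤ key n x b) ⊆
          (Finset.Icc 1 (2*n)).filter (fun c => key n x c ≤ key n x a) := by
        intro c hc
        simp only [Finset.mem_filter] at hc ⊢
        exact ⟨hc.1, le_trans hc.2 hk⟩
      have := Finset.card_le_card hsub
      simp only [hπdef] at h
      omega
    · intro h
      apply Finset.card_lt_card
      have hsub : (Finset.Icc 1 (2*n)).filter (fun c => key n x c ≤ key n x a) ⊆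
          (Finset.Icc 1 (2*n)).filter (fun c => key n x c ≤ key n x b) := by
        intro c hc
        simp only [Finset.mem_filter] at hc ⊢
        exact ⟨hc.1, le_trans hc.2 (le_of_lt h)⟩
      rw [Finset.ssubset_iff_of_subset hsub]
      refine ⟨b, Finset.mem_filter.mpr ⟨hb, le_rfl⟩, ?_⟩
      simp only [Finset.mem_filter]
      omega
  have hmaps : Set.MapsTo π (Set.Icc 1 (2*n)) (Set.Icc 1 (2*n)) := by
    intro a ha
    simp only [Set.mem_Icc] at ha ⊢
    simp only [hπdef]
    constructor
    · have hmem : a ∈ (Finset.Icc 1 (2*n)).filter (fun b => key n x b ≤ key n x a) :=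
        Finset.mem_filter.mpr ⟨Finset.mem_Icc.mpr ha, le_rfl⟩
      have := Finset.card_pos.mpr ⟨a, hmem⟩
      omega
    · have := Finset.card_filter_le (Finset.Icc 1 (2*n)) (fun b => key n x b ≤ key n x a)
      rw [Nat.card_Icc] at this
      omega
  have hinj : Set.InjOn π (Set.Icc 1 (2*n)) := by
    intro a ha b hb h
    have ha' : a ∈ Finset.Icc 1 (2*n) := Finset.mem_Icc.mpr (Set.mem_Icc.mp ha)
    have hb' : b ∈ Finset.Icc 1 (2*n) := Finset.mem_Icc.mpr (Set.mem_Icc.mp hb)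
    have hk : key n x a = key n x b := by
      by_contra hne
      rcases Nat.lt_or_ge (key n x a) (key n x b) with hlt | hge
      · have := (hmono a b ha' hb').mpr hlt; omega
      · have hlt : key n x b < key n x a := by omega
        have := (hmono b a hb' ha').mpr hlt; omega
    obtain ⟨i, hi1, hi2, hi⟩ := hform a (Set.mem_Icc.mp ha).1 (Set.mem_Icc.mp ha).2
    obtain ⟨j, hj1, hj2, hj⟩ := hform b (Set.mem_Icc.mp hb).1 (Set.mem_Icc.mp hb).2
    omega
  have hbij : Set.BijOn π (Set.Icc 1 (2*n)) (Set.Icc 1 (2*n)) :=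
    ((Set.finite_Icc 1 (2*n)).injOn_iff_bijOn_of_mapsTo hmaps).mp hinj
  refine ⟨⟨fun a b h => gamma_zero n x h, π, hbij, ?_⟩, ?_⟩
  · intro a b h1 hab hb2
    have hia : a ∈ Finset.Icc 1 (2*n) := Finset.mem_Icc.mpr ⟨h1, by omega⟩
    have hib : b ∈ Finset.Icc 1 (2*n) := Finset.mem_Icc.mpr ⟨by omega, hb2⟩
    rw [show (if π a < π b then (1:ℝ) else 0)
        = if key n x a < key n x b then (1:ℝ) else 0 from
      if_congr (hmono a b hia hib) rfl rfl]
    rcases Nat.mod_two_eq_zero_or_one a with hpa | hpa <;>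
      rcases Nat.mod_two_eq_zero_or_one b with hpb | hpb
    · -- even, even
      obtain ⟨i, rfl⟩ : ∃ i, a = 2*i := ⟨a/2, by omega⟩
      obtain ⟨j, rfl⟩ : ∃ j, b = 2*j := ⟨b/2, by omega⟩
      have h1i : 1 ≤ i := by omega
      have hij : i < j := by omega
      have hjn : j ≤ n := by omega
      rw [gamma_ee n x h1i hij hjn, hxp i j h1i hij hjn,
        key_even n x h1i, key_even n x (by omega : 1 ≤ j)]
      rcases hx01 i i h1i le_rfl (by omega) with hxi | hxi <;>
        rcases hx01 j j (by omega) le_rfl hjn with hxj | hxj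
      · rw [if_neg (show ¬(x i i = 1) by rw [hxi]; norm_num), if_neg (show ¬(x j j = 1) by rw [hxj]; norm_num),
          if_neg (by omega : ¬ (n + 2*(n-i) < n + 2*(n-j))), hxi, hxj]
        norm_num
      · rw [if_neg (show ¬(x i i = 1) by rw [hxi]; norm_num), if_pos hxj,
          if_pos (by omega : n + 2*(n-i) < 3*n + (n-j)), hxi, hxj]
        norm_num
      · rw [if_pos hxi, if_neg (show ¬(x j j = 1) by rw [hxj]; norm_num),
          if_neg (by omega : ¬ (3*n + (n-i) < n + 2*(n-j))), hxi, hxj]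
        norm_num
      · rw [if_pos hxi, if_pos hxj,
          if_neg (by omega : ¬ (3*n + (n-i) < 3*n + (n-j))), hxi, hxj]
        norm_num
    · -- even, odd
      obtain ⟨i, rfl⟩ : ∃ i, a = 2*i := ⟨a/2, by omega⟩
      obtain ⟨j, rfl⟩ : ∃ j, b = 2*j-1 := ⟨(b+1)/2, by omega⟩
      have h1i : 1 ≤ i := by omega
      have hij : i < j := by omega
      have hjn : j ≤ n := by omega
      rw [gamma_eo n x h1i hij hjn, key_even n x h1i, key_odd n x (by omega : 1 ≤ j)]
      rcases hx01 i i h1i le_rfl (by omega) with hxi | hxi <;>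
        rcases hx01 j j (by omega) le_rfl hjn with hxj | hxj
      · rw [if_neg (show ¬(x i i = 1) by rw [hxi]; norm_num), if_neg (show ¬(x j j = 1) by rw [hxj]; norm_num),
          if_neg (by omega : ¬ (n + 2*(n-i) < n + 2*(n-j) + 1))]
      · rw [if_neg (show ¬(x i i = 1) by rw [hxi]; norm_num), if_pos hxj,
          if_neg (by omega : ¬ (n + 2*(n-i) < n - j))]
      · rw [if_pos hxi, if_neg (show ¬(x j j = 1) by rw [hxj]; norm_num),
          if_neg (by omega : ¬ (3*n + (n-i) < n + 2*(n-j) + 1))]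
      · rw [if_pos hxi, if_pos hxj,
          if_neg (by omega : ¬ (3*n + (n-i) < n - j))]
    · -- odd, even
      obtain ⟨i, rfl⟩ : ∃ i, a = 2*i-1 := ⟨(a+1)/2, by omega⟩
      obtain ⟨j, rfl⟩ : ∃ j, b = 2*j := ⟨b/2, by omega⟩
      have h1i : 1 ≤ i := by omega
      have hijle : i ≤ j := by omega
      have hjn : j ≤ n := by omega
      rcases eq_or_lt_of_le hijle with rfl | hij
      · rw [gamma_oe n x h1i hjn, key_odd n x h1i, key_even n x h1i]
        rcases hx01 i i h1i le_rfl hjn with hxi | hxi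
        · rw [if_neg (show ¬(x i i = 1) by rw [hxi]; norm_num), if_neg (show ¬(x i i = 1) by rw [hxi]; norm_num),
            if_neg (by omega : ¬ (n + 2*(n-i) + 1 < n + 2*(n-i))), hxi]
        · rw [if_pos hxi, if_pos hxi,
            if_pos (by omega : n - i < 3*n + (n-i)), hxi]
      · rw [gamma_oe' n x h1i hij hjn, hxp i j h1i hij hjn,
          key_odd n x h1i, key_even n x (by omega : 1 ≤ j)]
        rcases hx01 i i h1i le_rfl (by omega) with hxi | hxi <;>
          rcases hx01 j j (by omega) le_rfl hjn with hxj | hxj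
        · rw [if_neg (show ¬(x i i = 1) by rw [hxi]; norm_num), if_neg (show ¬(x j j = 1) by rw [hxj]; norm_num),
            if_neg (by omega : ¬ (n + 2*(n-i) + 1 < n + 2*(n-j))), hxi, hxj]
          norm_num
        · rw [if_neg (show ¬(x i i = 1) by rw [hxi]; norm_num), if_pos hxj,
            if_pos (by omega : n + 2*(n-i) + 1 < 3*n + (n-j)), hxi, hxj]
          norm_num
        · rw [if_pos hxi, if_neg (show ¬(x j j = 1) by rw [hxj]; norm_num),
            if_pos (by omega : n - i < n + 2*(n-j)), hxi, hxj]
          norm_num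
        · rw [if_pos hxi, if_pos hxj,
            if_pos (by omega : n - i < 3*n + (n-j)), hxi, hxj]
          norm_num
    · -- odd, odd
      obtain ⟨i, rfl⟩ : ∃ i, a = 2*i-1 := ⟨(a+1)/2, by omega⟩
      obtain ⟨j, rfl⟩ : ∃ j, b = 2*j-1 := ⟨(b+1)/2, by omega⟩
      have h1i : 1 ≤ i := by omega
      have hij : i < j := by omega
      have hjn : j ≤ n := by omega
      rw [gamma_oo n x h1i hij hjn, hxp i j h1i hij hjn,
        key_odd n x h1i, key_odd n x (by omega : 1 ≤ j)]
      rcases hx01 i i h1i le_rfl (by omega) with hxi | hxi <;>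
        rcases hx01 j j (by omega) le_rfl hjn with hxj | hxj
      · rw [if_neg (show ¬(x i i = 1) by rw [hxi]; norm_num), if_neg (show ¬(x j j = 1) by rw [hxj]; norm_num),
          if_neg (by omega : ¬ (n + 2*(n-i) + 1 < n + 2*(n-j) + 1)), hxi, hxj]
        norm_num
      · rw [if_neg (show ¬(x i i = 1) by rw [hxi]; norm_num), if_pos hxj,
          if_neg (by omega : ¬ (n + 2*(n-i) + 1 < n - j)), hxi, hxj]
        norm_num
      · rw [if_pos hxi, if_neg (show ¬(x j j = 1) by rw [hxj]; norm_num),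
          if_pos (by omega : n - i < n + 2*(n-j) + 1), hxi, hxj]
        norm_num
      · rw [if_pos hxi, if_pos hxj,
          if_neg (by omega : ¬ (n - i < n - j)), hxi, hxj]
        norm_num
  · intro i j h1 h2 h3
    refine ⟨gamma_eo n x h1 h2 h3, ?_, ?_⟩
    · rw [gamma_oe n x h1 (by omega), gamma_ee n x h1 h2 h3, gamma_oe' n x h1 h2 h3]
      ring
    · rw [gamma_oo n x h1 h2 h3, gamma_oe n x (by omega : 1 ≤ j) h3,
        gamma_oe' n x h1 h2 h3]
      ring

lemma gamma_beta_eq (n : ℕ) {y : ℕ → ℕ → ℝ} (hy : y ∈ FaceF n) :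
    gamma n (beta n y) = y := by
  obtain ⟨⟨hy0, _⟩, hyeq⟩ := hy
  funext a b
  by_cases hr : 1 ≤ a ∧ a < b ∧ b ≤ 2*n
  · obtain ⟨h1, hab, hb⟩ := hr
    rcases Nat.mod_two_eq_zero_or_one a with hpa | hpa <;>
      rcases Nat.mod_two_eq_zero_or_one b with hpb | hpb
    · obtain ⟨i, rfl⟩ : ∃ i, a = 2*i := ⟨a/2, by omega⟩
      obtain ⟨j, rfl⟩ : ∃ j, b = 2*j := ⟨b/2, by omega⟩
      have h1i : 1 ≤ i := by omega
      have hij : i < j := by omega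
      have hjn : j ≤ n := by omega
      rw [gamma_ee n _ h1i hij hjn, beta_diag n y (by omega) hjn,
        beta_lt n y h1i hij hjn]
      ring
    · obtain ⟨i, rfl⟩ : ∃ i, a = 2*i := ⟨a/2, by omega⟩
      obtain ⟨j, rfl⟩ : ∃ j, b = 2*j-1 := ⟨(b+1)/2, by omega⟩
      have h1i : 1 ≤ i := by omega
      have hij : i < j := by omega
      have hjn : j ≤ n := by omega
      rw [gamma_eo n _ h1i hij hjn]
      exact ((hyeq i j h1i hij hjn).1).symm
    · obtain ⟨i, rfl⟩ : ∃ i, a = 2*i-1 := ⟨(a+1)/2, by omega⟩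
      obtain ⟨j, rfl⟩ : ∃ j, b = 2*j := ⟨b/2, by omega⟩
      have h1i : 1 ≤ i := by omega
      have hijle : i ≤ j := by omega
      have hjn : j ≤ n := by omega
      rcases eq_or_lt_of_le hijle with rfl | hij
      · rw [gamma_oe n _ h1i hjn, beta_diag n y h1i hjn]
      · have e2 := (hyeq i j h1i hij hjn).2.1
        rw [gamma_oe' n _ h1i hij hjn, beta_diag n y h1i (by omega),
          beta_diag n y (by omega) hjn, beta_lt n y h1i hij hjn]
        linarith
    · obtain ⟨i, rfl⟩ : ∃ i, a = 2*i-1 := ⟨(a+1)/2, by omega⟩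
      obtain ⟨j, rfl⟩ : ∃ j, b = 2*j-1 := ⟨(b+1)/2, by omega⟩
      have h1i : 1 ≤ i := by omega
      have hij : i < j := by omega
      have hjn : j ≤ n := by omega
      have e2 := (hyeq i j h1i hij hjn).2.1
      have e3 := (hyeq i j h1i hij hjn).2.2
      rw [gamma_oo n _ h1i hij hjn, beta_diag n y h1i (by omega),
        beta_lt n y h1i hij hjn]
      linarith
  · rw [gamma_zero n _ hr, hy0 a b hr]

lemma beta_gamma_eq (n : ℕ) {x : ℕ → ℕ → ℝ} (hx : x ∈ BQP n) :
    beta n (gamma n x) = x := by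
  obtain ⟨hx0, -, -⟩ := hx
  funext i j
  by_cases h : 1 ≤ i ∧ i ≤ j ∧ j ≤ n
  · obtain ⟨h1, h2, h3⟩ := h
    rcases eq_or_lt_of_le h2 with rfl | hlt
    · rw [beta_diag n _ h1 h3, gamma_oe n x h1 h3]
    · rw [beta_lt n _ h1 hlt h3, gamma_oe n x (by omega : 1 ≤ j) h3,
        gamma_ee n x h1 hlt h3]
      ring
  · rw [beta_zero n _ h, hx0 i j h]

/-- `γ` is the inverse of the bijection `β : F → BQP n`;
it maps `BQP n` bijectively onto `F`, it is (restriction of) an affine map,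
and `β` is an affine equivalence between `conv F` and `conv (BQP n)`. -/
theorem gamma_is_inverse_of_beta (n : ℕ) :
    Set.InvOn (gamma n) (beta n) (FaceF n) (BQP n) ∧
    Set.BijOn (gamma n) (BQP n) (FaceF n) ∧
    (∃ A : (ℕ → ℕ → ℝ) →ᵃ[ℝ] (ℕ → ℕ → ℝ), ∀ x, A x = gamma n x) ∧
    beta n '' (convexHull ℝ (FaceF n)) = convexHull ℝ (BQP n) := by
  have himg : beta n '' FaceF n = BQP n := by
    apply Set.Subset.antisymm
    · rintro x ⟨y, hy, rfl⟩
      exact beta_mem_BQP n hy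
    · intro x hx
      exact ⟨gamma n x, gamma_mem_FaceF n hx, beta_gamma_eq n hx⟩
  refine ⟨⟨fun y hy => gamma_beta_eq n hy, fun x hx => beta_gamma_eq n hx⟩,
    ⟨fun x hx => gamma_mem_FaceF n hx, ?_, ?_⟩,
    ⟨(gammaLin n).toAffineMap, fun x => rfl⟩, ?_⟩
  · intro x1 h1 x2 h2 he
    rw [← beta_gamma_eq n h1, ← beta_gamma_eq n h2, he]
  · intro y hy
    exact ⟨beta n y, beta_mem_BQP n hy, gamma_beta_eq n hy⟩
  · calc beta n '' convexHull ℝ (FaceF n)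
        = (betaLin n) '' convexHull ℝ (FaceF n) := rfl
      _ = convexHull ℝ ((betaLin n) '' FaceF n) := (betaLin n).image_convexHull _
      _ = convexHull ℝ (BQP n) := by
          rw [show ⇑(betaLin n) '' FaceF n = beta n '' FaceF n from rfl, himg]
end

section
/- For every n ∈ ℕ and every y ∈ F, the following implications hold for all 1 ≤ i < j ≤ n: if y_{2i-1,2i} = 1 then y_{2i,2j} = 0; if y_{2j-1,2j} = 0 then y_{2i,2j} = 0; and if y_{2i-1,2i} = 0 and y_{2j-1,2j} = 1 then y_{2i,2j} = 1. -/
/-- for every `y ∈ F` and all `1 ≤ i < j ≤ n`: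
if `y (2i-1) (2i) = 1` then `y (2i) (2j) = 0`;
if `y (2j-1) (2j) = 0` then `y (2i) (2j) = 0`; and
if `y (2i-1) (2i) = 0` and `y (2j-1) (2j) = 1` then `y (2i) (2j) = 1`. -/
theorem faceF_even_coord_implications (n : ℕ) (y : ℕ → ℕ → ℝ) (hy : y ∈ FaceF n) :
    ∀ i j, 1 ≤ i → i < j → j ≤ n →
      (y (2 * i - 1) (2 * i) = 1 → y (2 * i) (2 * j) = 0) ∧
      (y (2 * j - 1) (2 * j) = 0 → y (2 * i) (2 * j) = 0) ∧
      (y (2 * i - 1) (2 * i) = 0 → y (2 * j - 1) (2 * j) = 1 → y (2 * i) (2 * j) = 1) := by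
  obtain ⟨⟨hzero, π, hbij, hval⟩, hface⟩ := hy
  intro i j hi hij hjn
  obtain ⟨h1, h2, h3⟩ := hface i j hi hij hjn
  have hb := hval (2*i) (2*j) (by omega) (by omega) (by omega)
  have hc := hval (2*i-1) (2*j) (by omega) (by omega) (by omega)
  have hd := hval (2*i-1) (2*j-1) (by omega) (by omega) (by omega)
  have he := hval (2*j-1) (2*j) (by omega) (by omega) (by omega)
  have hz := hval (2*i) (2*j-1) (by omega) (by omega) (by omega)
  have hbv : y (2*i) (2*j) = 0 ∨ y (2*i) (2*j) = 1 := by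
    rw [hb]; split_ifs <;> simp
  have hcv : y (2*i-1) (2*j) = 0 ∨ y (2*i-1) (2*j) = 1 := by
    rw [hc]; split_ifs <;> simp
  have hdv : y (2*i-1) (2*j-1) = 0 ∨ y (2*i-1) (2*j-1) = 1 := by
    rw [hd]; split_ifs <;> simp
  refine ⟨?_, ?_, ?_⟩
  · intro hA
    rcases hbv with h | h <;> rcases hcv with h' | h' <;> linarith
  · intro hE
    have hz' : ¬ π (2*i) < π (2*j-1) := by
      intro hlt
      rw [h1, if_pos hlt] at hz
      exact one_ne_zero hz.symm
    have he' : ¬ π (2*j-1) < π (2*j) := by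
      intro hlt
      rw [hE, if_pos hlt] at he
      exact one_ne_zero he.symm
    rw [hb, if_neg]
    intro hlt
    omega
  · intro hA hE
    rcases hbv with h | h <;> rcases hdv with h' | h' <;> linarith
end
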